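/- arXiv:cond-mat/9704017 — 7 statements merged into one kernel-verified Lean document; each statement's English description precedes it below -/
import Mathlib

section
/- The duality map Φ : D → ℝ³ defined by Φ(Jσ*, Jτ*, Jστ*) = (¼ ln(S/(T·L)), ¼ ln(T/(S·L)), ¼ ln(L/(S·T))) — where S, T, L are computed from (Jσ*, Jτ*, Jστ*) via s = tanh Jσ*, t = tanh Jτ*, l = tanh Jστ*, S = (s+tl)/(1+stl), T = (t+sl)/(1+stl), L = (l+st)/(1+stl) — is a bijection from D onto D. Equivalently, the relations S = e^{−2(Jτ+Jστ)}, T = e^{−2(Jσ+Jστ)}, L = e^{−2(Jσ+Jτ)} define a bijection of D onto itself. -/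
/-- The domain `D = {(x,y,z) : x ≥ y ≥ z, y > 0, tanh z > -tanh x tanh y}`. -/
def D : Set (ℝ × ℝ × ℝ) :=
  {p | p.1 ≥ p.2.1 ∧ p.2.1 ≥ p.2.2 ∧ p.2.1 > 0 ∧
    Real.tanh p.2.2 > -(Real.tanh p.1 * Real.tanh p.2.1)}

/-- The duality map `Φ(Jσ*, Jτ*, Jστ*) = (¼ ln(S/(T·L)), ¼ ln(T/(S·L)), ¼ ln(L/(S·T)))`,
where `S, T, L` are computed from `s = tanh Jσ*`, `t = tanh Jτ*`, `l = tanh Jστ*`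
via `S = (s+tl)/(1+stl)`, `T = (t+sl)/(1+stl)`, `L = (l+st)/(1+stl)`.
This encodes the relations `S = e^{-2(Jτ+Jστ)}`, `T = e^{-2(Jσ+Jστ)}`, `L = e^{-2(Jσ+Jτ)}`. -/
noncomputable def dualityMap (p : ℝ × ℝ × ℝ) : ℝ × ℝ × ℝ :=
  let s := Real.tanh p.1
  let t := Real.tanh p.2.1
  let l := Real.tanh p.2.2
  let S := (s + t * l) / (1 + s * t * l)
  let T := (t + s * l) / (1 + s * t * l)
  let L := (l + s * t) / (1 + s * t * l)
  ((1 / 4) * Real.log (S / (T * L)),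
   (1 / 4) * Real.log (T / (S * L)),
   (1 / 4) * Real.log (L / (S * T)))


open Real

noncomputable def Ev (x : ℝ) : ℝ := Real.exp (2*x)
noncomputable def Sn (x y z : ℝ) : ℝ := Ev x * Ev y * Ev z + Ev x - Ev y - Ev z
noncomputable def Tn (x y z : ℝ) : ℝ := Ev x * Ev y * Ev z - Ev x + Ev y - Ev z
noncomputable def Ln (x y z : ℝ) : ℝ := Ev x * Ev y * Ev z - Ev x - Ev y + Ev z
noncomputable def Qd (x y z : ℝ) : ℝ := Ev x * Ev y * Ev z + Ev x + Ev y + Ev z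

lemma Ev_pos (x : ℝ) : 0 < Ev x := exp_pos _

lemma qd_pos (x y z : ℝ) : 0 < Qd x y z := by
  unfold Qd Ev; positivity

lemma tanh_formula (x : ℝ) : Real.tanh x = (Ev x - 1) / (Ev x + 1) := by
  have h : Real.exp x ≠ 0 := (exp_pos x).ne'
  have h2 : (0:ℝ) < Real.exp x * Real.exp x + 1 := by positivity
  rw [Real.tanh_eq_sinh_div_cosh, Real.sinh_eq, Real.cosh_eq, Ev, two_mul,
    Real.exp_add, Real.exp_neg]
  field_simp

lemma mem_D_iff (x y z : ℝ) :
    (x, y, z) ∈ D ↔ x ≥ y ∧ y ≥ z ∧ y > 0 ∧ 0 < Ln x y z := by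
  simp only [D, Set.mem_setOf_eq]
  refine and_congr_right fun _ => and_congr_right fun _ => and_congr_right fun _ => ?_
  rw [tanh_formula x, tanh_formula y, tanh_formula z]
  have hx := Ev_pos x; have hy := Ev_pos y; have hz := Ev_pos z
  have hR : (0:ℝ) < (Ev x + 1) * (Ev y + 1) * (Ev z + 1) := by positivity
  have key : (Ev z - 1)/(Ev z + 1) + (Ev x - 1)/(Ev x + 1) * ((Ev y - 1)/(Ev y + 1))
      = 2 * Ln x y z / ((Ev x + 1) * (Ev y + 1) * (Ev z + 1)) := by
    unfold Ln
    field_simp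
    ring
  rw [gt_iff_lt, neg_lt_iff_pos_add, key]
  rw [div_pos_iff]
  constructor
  · rintro (⟨h1, _⟩ | ⟨_, h2⟩)
    · linarith
    · linarith
  · intro h
    left
    constructor <;> linarith

lemma expr (x y z : ℝ) (hS : 0 < Sn x y z) (hT : 0 < Tn x y z) (hL : 0 < Ln x y z) :
    dualityMap (x, y, z) =
      ((1/4) * log (Sn x y z * Qd x y z / (Tn x y z * Ln x y z)),
       (1/4) * log (Tn x y z * Qd x y z / (Sn x y z * Ln x y z)),
       (1/4) * log (Ln x y z * Qd x y z / (Sn x y z * Tn x y z))) := by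
  have hQ := qd_pos x y z
  have hx := Ev_pos x; have hy := Ev_pos y; have hz := Ev_pos z
  have hR : (0:ℝ) < (Ev x + 1) * (Ev y + 1) * (Ev z + 1) := by positivity
  simp only [dualityMap]
  rw [tanh_formula x, tanh_formula y, tanh_formula z]
  have hs : (Ev x - 1)/(Ev x + 1) + (Ev y - 1)/(Ev y + 1) * ((Ev z - 1)/(Ev z + 1))
      = 2 * Sn x y z / ((Ev x + 1) * (Ev y + 1) * (Ev z + 1)) := by
    unfold Sn; field_simp; ring
  have ht : (Ev y - 1)/(Ev y + 1) + (Ev x - 1)/(Ev x + 1) * ((Ev z - 1)/(Ev z + 1))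
      = 2 * Tn x y z / ((Ev x + 1) * (Ev y + 1) * (Ev z + 1)) := by
    unfold Tn; field_simp; ring
  have hl : (Ev z - 1)/(Ev z + 1) + (Ev x - 1)/(Ev x + 1) * ((Ev y - 1)/(Ev y + 1))
      = 2 * Ln x y z / ((Ev x + 1) * (Ev y + 1) * (Ev z + 1)) := by
    unfold Ln; field_simp; ring
  have h1 : 1 + (Ev x - 1)/(Ev x + 1) * ((Ev y - 1)/(Ev y + 1)) * ((Ev z - 1)/(Ev z + 1))
      = 2 * Qd x y z / ((Ev x + 1) * (Ev y + 1) * (Ev z + 1)) := by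
    unfold Qd; field_simp; ring
  rw [hs, ht, hl, h1]
  have harg : ∀ a b c : ℝ, 0 < a → 0 < b → 0 < c →
      (2 * a / ((Ev x + 1) * (Ev y + 1) * (Ev z + 1)) / (2 * Qd x y z / ((Ev x + 1) * (Ev y + 1) * (Ev z + 1)))) /
       ((2 * b / ((Ev x + 1) * (Ev y + 1) * (Ev z + 1)) / (2 * Qd x y z / ((Ev x + 1) * (Ev y + 1) * (Ev z + 1)))) *
        (2 * c / ((Ev x + 1) * (Ev y + 1) * (Ev z + 1)) / (2 * Qd x y z / ((Ev x + 1) * (Ev y + 1) * (Ev z + 1)))))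
      = a * Qd x y z / (b * c) := by
    intro a b c ha hb hc
    field_simp
  rw [harg _ _ _ hS hT hL, harg _ _ _ hT hS hL, harg _ _ _ hL hS hT]

lemma exp_quarter (u : ℝ) (hu : 0 < u) : Ev ((1/4) * log u) = Real.sqrt u := by
  unfold Ev
  rw [Real.sqrt_eq_rpow, Real.rpow_def_of_pos hu]
  congr 1
  ring

set_option maxHeartbeats 1000000 in
lemma main_lemma (x y z : ℝ) (h : (x, y, z) ∈ D) :
    dualityMap (x, y, z) ∈ D ∧ dualityMap (dualityMap (x, y, z)) = (x, y, z) := by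
  rw [mem_D_iff] at h
  obtain ⟨hxy, hyz, hy0, hL⟩ := h
  have hx := Ev_pos x; have hy := Ev_pos y; have hz := Ev_pos z
  have hQ := qd_pos x y z
  have hB1 : 1 < Ev y := by
    unfold Ev; rw [show (1:ℝ) = Real.exp 0 by simp]; exact exp_lt_exp.2 (by linarith)
  have hAB : Ev y ≤ Ev x := by unfold Ev; exact exp_le_exp.2 (by linarith)
  have hBC : Ev z ≤ Ev y := by unfold Ev; exact exp_le_exp.2 (by linarith)
  have hTL : Ln x y z ≤ Tn x y z := by unfold Tn Ln; linarith
  have hST : Tn x y z ≤ Sn x y z := by unfold Sn Tn; linarith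
  have hT : 0 < Tn x y z := lt_of_lt_of_le hL hTL
  have hS : 0 < Sn x y z := lt_of_lt_of_le hT hST
  -- abbreviations
  set A := Ev x with hA
  set B := Ev y with hBdef
  set C := Ev z with hCdef
  -- the primed point
  have hu1 : 0 < Sn x y z * Qd x y z / (Tn x y z * Ln x y z) := by positivity
  have hu2 : 0 < Tn x y z * Qd x y z / (Sn x y z * Ln x y z) := by positivity
  have hu3 : 0 < Ln x y z * Qd x y z / (Sn x y z * Tn x y z) := by positivity
  set x' := (1/4) * log (Sn x y z * Qd x y z / (Tn x y z * Ln x y z)) with hx'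
  set y' := (1/4) * log (Tn x y z * Qd x y z / (Sn x y z * Ln x y z)) with hy'
  set z' := (1/4) * log (Ln x y z * Qd x y z / (Sn x y z * Tn x y z)) with hz'
  have hmap : dualityMap (x, y, z) = (x', y', z') := expr x y z hS hT hL
  -- sqrt variables
  set α := Real.sqrt (Sn x y z) with hαdef
  set β := Real.sqrt (Tn x y z) with hβdef
  set γ := Real.sqrt (Ln x y z) with hγdef
  set q := Real.sqrt (Qd x y z) with hqdef
  have hα : 0 < α := Real.sqrt_pos.2 hS
  have hβ : 0 < β := Real.sqrt_pos.2 hT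
  have hγ : 0 < γ := Real.sqrt_pos.2 hL
  have hq : 0 < q := Real.sqrt_pos.2 hQ
  have hα2 : α ^ 2 = Sn x y z := Real.sq_sqrt hS.le
  have hβ2 : β ^ 2 = Tn x y z := Real.sq_sqrt hT.le
  have hγ2 : γ ^ 2 = Ln x y z := Real.sq_sqrt hL.le
  have hq2 : q ^ 2 = Qd x y z := Real.sq_sqrt hQ.le
  -- exponentials of primed coordinates
  have hA' : Ev x' = α * q / (β * γ) := by
    rw [hx', exp_quarter _ hu1, Real.sqrt_div (by positivity), Real.sqrt_mul hS.le,
      Real.sqrt_mul hT.le]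
  have hB' : Ev y' = β * q / (α * γ) := by
    rw [hy', exp_quarter _ hu2, Real.sqrt_div (by positivity), Real.sqrt_mul hT.le,
      Real.sqrt_mul hS.le]
  have hC' : Ev z' = γ * q / (α * β) := by
    rw [hz', exp_quarter _ hu3, Real.sqrt_div (by positivity), Real.sqrt_mul hL.le,
      Real.sqrt_mul hS.le]
  have h4A : q ^ 2 + α ^ 2 - β ^ 2 - γ ^ 2 = 4 * A := by
    rw [hq2, hα2, hβ2, hγ2]; unfold Sn Tn Ln Qd; ring
  have h4B : q ^ 2 - α ^ 2 + β ^ 2 - γ ^ 2 = 4 * B := by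
    rw [hq2, hα2, hβ2, hγ2]; unfold Sn Tn Ln Qd; ring
  have h4C : q ^ 2 - α ^ 2 - β ^ 2 + γ ^ 2 = 4 * C := by
    rw [hq2, hα2, hβ2, hγ2]; unfold Sn Tn Ln Qd; ring
  have h4P : q ^ 2 + α ^ 2 + β ^ 2 + γ ^ 2 = 4 * (A * B * C) := by
    rw [hq2, hα2, hβ2, hγ2]; unfold Sn Tn Ln Qd; ring
  have hSn' : Sn x' y' z' = 4 * A * q / (α * β * γ) := by
    have h0 : Sn x' y' z' = (q ^ 2 + α ^ 2 - β ^ 2 - γ ^ 2) * q / (α * β * γ) := by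
      unfold Sn; rw [hA', hB', hC']; field_simp
    rw [h0, h4A]
  have hTn' : Tn x' y' z' = 4 * B * q / (α * β * γ) := by
    have h0 : Tn x' y' z' = (q ^ 2 - α ^ 2 + β ^ 2 - γ ^ 2) * q / (α * β * γ) := by
      unfold Tn; rw [hA', hB', hC']; field_simp
    rw [h0, h4B]
  have hLn' : Ln x' y' z' = 4 * C * q / (α * β * γ) := by
    have h0 : Ln x' y' z' = (q ^ 2 - α ^ 2 - β ^ 2 + γ ^ 2) * q / (α * β * γ) := by
      unfold Ln; rw [hA', hB', hC']; field_simp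
    rw [h0, h4C]
  have hQd' : Qd x' y' z' = 4 * (A * B * C) * q / (α * β * γ) := by
    have h0 : Qd x' y' z' = (q ^ 2 + α ^ 2 + β ^ 2 + γ ^ 2) * q / (α * β * γ) := by
      unfold Qd; rw [hA', hB', hC']; field_simp
    rw [h0, h4P]
  have hS' : 0 < Sn x' y' z' := by rw [hSn']; positivity
  have hT' : 0 < Tn x' y' z' := by rw [hTn']; positivity
  have hL' : 0 < Ln x' y' z' := by rw [hLn']; positivity
  clear_value x' y' z' α β γ q
  constructor
  · -- membership in D
    rw [hmap, mem_D_iff]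
    refine ⟨?_, ?_, ?_, hL'⟩
    · -- x' ≥ y'
      have hle : Tn x y z * Qd x y z / (Sn x y z * Ln x y z)
          ≤ Sn x y z * Qd x y z / (Tn x y z * Ln x y z) := by
        rw [div_le_div_iff₀ (by positivity) (by positivity)]
        have hsq : Tn x y z * Tn x y z ≤ Sn x y z * Sn x y z :=
          mul_le_mul hST hST hT.le hS.le
        calc Tn x y z * Qd x y z * (Tn x y z * Ln x y z)
            = Qd x y z * Ln x y z * (Tn x y z * Tn x y z) := by ring
          _ ≤ Qd x y z * Ln x y z * (Sn x y z * Sn x y z) :=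
              mul_le_mul_of_nonneg_left hsq (by positivity)
          _ = Sn x y z * Qd x y z * (Sn x y z * Ln x y z) := by ring
      rw [ge_iff_le, hx', hy']
      gcongr
    · -- y' ≥ z'
      have hle : Ln x y z * Qd x y z / (Sn x y z * Tn x y z)
          ≤ Tn x y z * Qd x y z / (Sn x y z * Ln x y z) := by
        rw [div_le_div_iff₀ (by positivity) (by positivity)]
        have hsq : Ln x y z * Ln x y z ≤ Tn x y z * Tn x y z :=
          mul_le_mul hTL hTL hL.le hT.le
        calc Ln x y z * Qd x y z * (Sn x y z * Ln x y z)
            = Qd x y z * Sn x y z * (Ln x y z * Ln x y z) := by ring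
          _ ≤ Qd x y z * Sn x y z * (Tn x y z * Tn x y z) :=
              mul_le_mul_of_nonneg_left hsq (by positivity)
          _ = Tn x y z * Qd x y z * (Sn x y z * Tn x y z) := by ring
      rw [ge_iff_le, hy', hz']
      gcongr
    · -- y' > 0
      rw [hy']
      have key : Tn x y z * Qd x y z - Sn x y z * Ln x y z = 4 * A * C * (B ^ 2 - 1) := by
        unfold Sn Tn Ln Qd; ring
      have hBB : 1 * 1 < B * B := mul_lt_mul' hB1.le hB1 zero_le_one (by linarith)
      have hpos : 0 < 4 * A * C * (B ^ 2 - 1) := by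
        apply mul_pos (by positivity)
        rw [sub_pos, sq]
        linarith
      have h1u : 1 < Tn x y z * Qd x y z / (Sn x y z * Ln x y z) := by
        rw [one_lt_div (by positivity)]
        linarith [key, hpos]
      have := Real.log_pos h1u
      positivity
  · -- involution
    rw [hmap, expr x' y' z' hS' hT' hL']
    have e1 : 4 * A * q / (α * β * γ) * (4 * (A * B * C) * q / (α * β * γ)) /
        (4 * B * q / (α * β * γ) * (4 * C * q / (α * β * γ))) = A ^ 2 := by
      field_simp
    have e2 : 4 * B * q / (α * β * γ) * (4 * (A * B * C) * q / (α * β * γ)) /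
        (4 * A * q / (α * β * γ) * (4 * C * q / (α * β * γ))) = B ^ 2 := by
      field_simp
    have e3 : 4 * C * q / (α * β * γ) * (4 * (A * B * C) * q / (α * β * γ)) /
        (4 * A * q / (α * β * γ) * (4 * B * q / (α * β * γ))) = C ^ 2 := by
      field_simp
    have lA : (1/4 : ℝ) * log (A ^ 2) = x := by
      rw [hA]; unfold Ev
      rw [sq, ← Real.exp_add, Real.log_exp]; ring
    have lB : (1/4 : ℝ) * log (B ^ 2) = y := by
      rw [hBdef]; unfold Ev
      rw [sq, ← Real.exp_add, Real.log_exp]; ring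
    have lC : (1/4 : ℝ) * log (C ^ 2) = z := by
      rw [hCdef]; unfold Ev
      rw [sq, ← Real.exp_add, Real.log_exp]; ring
    rw [hSn', hTn', hLn', hQd', e1, e2, e3, lA, lB, lC]

/-- The duality map is a bijection from `D` onto `D`. -/
theorem stmt1 : Set.BijOn dualityMap D D := by
  have hmaps : Set.MapsTo dualityMap D D := by
    rintro ⟨x, y, z⟩ hp
    exact (main_lemma x y z hp).1
  have hinv : Set.LeftInvOn dualityMap dualityMap D := by
    rintro ⟨x, y, z⟩ hp
    exact (main_lemma x y z hp).2
  exact Set.InvOn.bijOn ⟨hinv, hinv⟩ hmaps hmaps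
end

section
/- Let (Jσ, Jτ, Jστ) ∈ D and set s = tanh Jσ, t = tanh Jτ, l = tanh Jστ. Then (Jσ, Jτ, Jστ) is a fixed point of the duality relations, i.e. (s+tl)/(1+stl) = e^{−2(Jτ+Jστ)}, (t+sl)/(1+stl) = e^{−2(Jσ+Jστ)} and (l+st)/(1+stl) = e^{−2(Jσ+Jτ)} all hold, if and only if l = (1 − st − s − t)/(1 − st + s + t). -/
/-!
With `a = e^{-2J}` one has `tanh J = (1 - a)/(1 + a)`, i.e. `e^{-2J} = (1 - tanh J)/(1 + tanh J)`.
Substituting this into the right-hand sides and clearing denominators (positive, as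
`|tanh| < 1`), each of the three duality relations becomes the vanishing of one and the same
symmetric polynomial `selfDualPoly s t l`. It is affine in `l`, with leading coefficient
`1 - st + s + t`, which is positive once the couplings `Jσ, Jτ` are nonnegative.
-/

open Real

namespace Real

theorem exp_neg_two_mul_eq_tanh (x : ℝ) : exp (-(2 * x)) = (1 - tanh x) / (1 + tanh x) := by
  have hab : exp x * exp (-x) = 1 := by rw [← exp_add]; simp
  rw [tanh_eq, show -(2 * x) = -x + -x by ring, exp_add]
  field_simp
  linear_combination (2 * exp (-x)) * hab

theorem exp_neg_two_mul_add_eq_tanh (x y : ℝ) :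
    exp (-2 * (x + y)) = (1 - tanh x) * (1 - tanh y) / ((1 + tanh x) * (1 + tanh y)) := by
  rw [show -2 * (x + y) = -(2 * x) + -(2 * y) by ring, exp_add, exp_neg_two_mul_eq_tanh,
    exp_neg_two_mul_eq_tanh, div_mul_div_comm]

theorem tanh_nonneg {x : ℝ} (hx : 0 ≤ x) : 0 ≤ tanh x := by
  rw [tanh_eq_sinh_div_cosh]
  exact div_nonneg (sinh_nonneg_iff.mpr hx) (cosh_pos x).le

end Real

def selfDualPoly (s t l : ℝ) : ℝ := s + t + l + s * t + t * l + l * s - s * t * l - 1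

theorem selfDualPoly_swap (s t l : ℝ) : selfDualPoly t s l = selfDualPoly s t l := by
  unfold selfDualPoly; ring

theorem selfDualPoly_rotate (s t l : ℝ) : selfDualPoly l s t = selfDualPoly s t l := by
  unfold selfDualPoly; ring

theorem duality_relation_iff_selfDualPoly {s t l : ℝ}
    (hs : |s| < 1) (ht : |t| < 1) (hl : |l| < 1) :
    (s + t * l) / (1 + s * t * l) = (1 - t) * (1 - l) / ((1 + t) * (1 + l)) ↔
      selfDualPoly s t l = 0 := by
  have htl : |t * l| < 1 := by
    rw [abs_mul]; exact mul_lt_one_of_nonneg_of_lt_one_left (abs_nonneg t) ht hl.le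
  have hstl : |s * (t * l)| < 1 := by
    rw [abs_mul]; exact mul_lt_one_of_nonneg_of_lt_one_left (abs_nonneg s) hs htl.le
  have hden : 1 + s * t * l ≠ 0 := by
    rw [mul_assoc]; linarith [neg_abs_le (s * (t * l))]
  have ht' : 0 < 1 + t := by linarith [neg_abs_le t]
  have hl' : 0 < 1 + l := by linarith [neg_abs_le l]
  have htl' : 0 < 1 + t * l := by linarith [neg_abs_le (t * l)]
  rw [div_eq_div_iff hden (by positivity), ← sub_eq_zero,
    show (s + t * l) * ((1 + t) * (1 + l)) - (1 - t) * (1 - l) * (1 + s * t * l)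
      = (1 + t * l) * selfDualPoly s t l by unfold selfDualPoly; ring,
    mul_eq_zero, or_iff_right htl'.ne']

theorem selfDualPoly_eq_zero_iff {s t l : ℝ} (hden : 1 - s * t + s + t ≠ 0) :
    selfDualPoly s t l = 0 ↔ l = (1 - s * t - s - t) / (1 - s * t + s + t) := by
  rw [eq_div_iff hden, selfDualPoly]
  constructor <;> intro h <;> linear_combination h

theorem stmt2_general (Jσ Jτ Jστ : ℝ)
    (h1 : Jσ ≥ Jτ) (h3 : Jτ > 0) :
    ((Real.tanh Jσ + Real.tanh Jτ * Real.tanh Jστ) /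
        (1 + Real.tanh Jσ * Real.tanh Jτ * Real.tanh Jστ) = Real.exp (-2 * (Jτ + Jστ)) ∧
     (Real.tanh Jτ + Real.tanh Jσ * Real.tanh Jστ) /
        (1 + Real.tanh Jσ * Real.tanh Jτ * Real.tanh Jστ) = Real.exp (-2 * (Jσ + Jστ)) ∧
     (Real.tanh Jστ + Real.tanh Jσ * Real.tanh Jτ) /
        (1 + Real.tanh Jσ * Real.tanh Jτ * Real.tanh Jστ) = Real.exp (-2 * (Jσ + Jτ)))
    ↔
    Real.tanh Jστ =
      (1 - Real.tanh Jσ * Real.tanh Jτ - Real.tanh Jσ - Real.tanh Jτ) /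
      (1 - Real.tanh Jσ * Real.tanh Jτ + Real.tanh Jσ + Real.tanh Jτ) := by
  simp only [exp_neg_two_mul_add_eq_tanh]
  set s := tanh Jσ
  set t := tanh Jτ
  set l := tanh Jστ
  have hs := abs_tanh_lt_one Jσ
  have ht := abs_tanh_lt_one Jτ
  have hl := abs_tanh_lt_one Jστ
  have rel₁ := duality_relation_iff_selfDualPoly hs ht hl
  have rel₂ := duality_relation_iff_selfDualPoly ht hs hl
  have rel₃ := duality_relation_iff_selfDualPoly hl hs ht
  rw [selfDualPoly_swap, show t * s * l = s * t * l by ring] at rel₂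
  rw [selfDualPoly_rotate, show l * s * t = s * t * l by ring] at rel₃
  rw [rel₁, rel₂, rel₃, and_self, and_self]
  have hs0 : 0 ≤ s := tanh_nonneg (by linarith)
  have ht0 : 0 ≤ t := tanh_nonneg h3.le
  have hst : s * t < 1 := by nlinarith [abs_lt.mp hs, abs_lt.mp ht]
  exact selfDualPoly_eq_zero_iff (by linarith : 0 < 1 - s * t + s + t).ne'

/-- For `(Jσ, Jτ, Jστ) ∈ D`, the triple is a fixed point of the duality
relations iff `l = (1 - st - s - t)/(1 - st + s + t)` where `s = tanh Jσ`, `t = tanh Jτ`,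
`l = tanh Jστ`. -/
theorem stmt2 (Jσ Jτ Jστ : ℝ)
    (h1 : Jσ ≥ Jτ) (h2 : Jτ ≥ Jστ) (h3 : Jτ > 0)
    (h4 : Real.tanh Jστ > -(Real.tanh Jσ * Real.tanh Jτ)) :
    ((Real.tanh Jσ + Real.tanh Jτ * Real.tanh Jστ) /
        (1 + Real.tanh Jσ * Real.tanh Jτ * Real.tanh Jστ) = Real.exp (-2 * (Jτ + Jστ)) ∧
     (Real.tanh Jτ + Real.tanh Jσ * Real.tanh Jστ) /
        (1 + Real.tanh Jσ * Real.tanh Jτ * Real.tanh Jστ) = Real.exp (-2 * (Jσ + Jστ)) ∧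
     (Real.tanh Jστ + Real.tanh Jσ * Real.tanh Jτ) /
        (1 + Real.tanh Jσ * Real.tanh Jτ * Real.tanh Jστ) = Real.exp (-2 * (Jσ + Jτ)))
    ↔
    Real.tanh Jστ =
      (1 - Real.tanh Jσ * Real.tanh Jτ - Real.tanh Jσ - Real.tanh Jτ) /
      (1 - Real.tanh Jσ * Real.tanh Jτ + Real.tanh Jσ + Real.tanh Jτ) :=
  stmt2_general Jσ Jτ Jστ h1 h3
end

section
/- Let (Jσ, Jτ, Jστ) ∈ D with Jστ ≠ 0, and set S = e^{−2(Jτ+Jστ)}, T = e^{−2(Jσ+Jστ)}, L = e^{−2(Jσ+Jτ)}. Define s = (1+S²−T²−L² − √((1+S²−T²−L²)² − 4(S−TL)²))/(2(S−TL)), t = (1+T²−S²−L² − √((1+T²−S²−L²)² − 4(T−SL)²))/(2(T−SL)), l = (1+L²−S²−T² − √((1+L²−S²−T²)² − 4(L−ST)²))/(2(L−ST)). Then 0 ≤ s < 1, 0 ≤ t < 1, −1 < l < 1, and (s,t,l) solves the system S = (s+tl)/(1+stl), T = (t+sl)/(1+stl), L = (l+st)/(1+stl). -/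
set_option maxHeartbeats 2000000 in


/-- For `(Jσ, Jτ, Jστ) ∈ D` with `Jστ ≠ 0`, the explicit formulas for
`s, t, l` in terms of `S = e^{-2(Jτ+Jστ)}`, `T = e^{-2(Jσ+Jστ)}`, `L = e^{-2(Jσ+Jτ)}`
satisfy `0 ≤ s < 1`, `0 ≤ t < 1`, `-1 < l < 1` and solve the system
`S = (s+tl)/(1+stl)`, `T = (t+sl)/(1+stl)`, `L = (l+st)/(1+stl)`. -/
theorem stmt4 (Jσ Jτ Jστ : ℝ)
    (h1 : Jσ ≥ Jτ) (h2 : Jτ ≥ Jστ) (h3 : Jτ > 0)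
    (h4 : Real.tanh Jστ > -(Real.tanh Jσ * Real.tanh Jτ))
    (h5 : Jστ ≠ 0)
    (S T L s t l : ℝ)
    (hS : S = Real.exp (-2 * (Jτ + Jστ)))
    (hT : T = Real.exp (-2 * (Jσ + Jστ)))
    (hL : L = Real.exp (-2 * (Jσ + Jτ)))
    (hs : s = (1 + S ^ 2 - T ^ 2 - L ^ 2 -
        Real.sqrt ((1 + S ^ 2 - T ^ 2 - L ^ 2) ^ 2 - 4 * (S - T * L) ^ 2)) /
        (2 * (S - T * L)))
    (ht : t = (1 + T ^ 2 - S ^ 2 - L ^ 2 -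
        Real.sqrt ((1 + T ^ 2 - S ^ 2 - L ^ 2) ^ 2 - 4 * (T - S * L) ^ 2)) /
        (2 * (T - S * L)))
    (hl : l = (1 + L ^ 2 - S ^ 2 - T ^ 2 -
        Real.sqrt ((1 + L ^ 2 - S ^ 2 - T ^ 2) ^ 2 - 4 * (L - S * T) ^ 2)) /
        (2 * (L - S * T))) :
    (0 ≤ s ∧ s < 1) ∧ (0 ≤ t ∧ t < 1) ∧ (-1 < l ∧ l < 1) ∧
    S = (s + t * l) / (1 + s * t * l) ∧
    T = (t + s * l) / (1 + s * t * l) ∧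
    L = (l + s * t) / (1 + s * t * l) := by
  have hJσ : 0 < Jσ := lt_of_lt_of_le h3 h1
  have hue : Real.exp Jσ ≠ 0 := Real.exp_ne_zero _
  have hve : Real.exp Jτ ≠ 0 := Real.exp_ne_zero _
  have hwe : Real.exp Jστ ≠ 0 := Real.exp_ne_zero _
  have hcσe : Real.cosh Jσ = (Real.exp Jσ + (Real.exp Jσ)⁻¹) / 2 := by
    rw [Real.cosh_eq, Real.exp_neg]
  have hcτe : Real.cosh Jτ = (Real.exp Jτ + (Real.exp Jτ)⁻¹) / 2 := by
    rw [Real.cosh_eq, Real.exp_neg]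
  have hcστe : Real.cosh Jστ = (Real.exp Jστ + (Real.exp Jστ)⁻¹) / 2 := by
    rw [Real.cosh_eq, Real.exp_neg]
  have hsσe : Real.sinh Jσ = (Real.exp Jσ - (Real.exp Jσ)⁻¹) / 2 := by
    rw [Real.sinh_eq, Real.exp_neg]
  have hsτe : Real.sinh Jτ = (Real.exp Jτ - (Real.exp Jτ)⁻¹) / 2 := by
    rw [Real.sinh_eq, Real.exp_neg]
  have hsστe : Real.sinh Jστ = (Real.exp Jστ - (Real.exp Jστ)⁻¹) / 2 := by
    rw [Real.sinh_eq, Real.exp_neg]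
  have hS1 : S = ((Real.exp Jτ) ^ 2 * (Real.exp Jστ) ^ 2)⁻¹ := by
    rw [hS, show (-2 * (Jτ + Jστ)) = -(Jτ + Jτ + (Jστ + Jστ)) by ring, Real.exp_neg,
      Real.exp_add, Real.exp_add, Real.exp_add]; ring
  have hT1 : T = ((Real.exp Jσ) ^ 2 * (Real.exp Jστ) ^ 2)⁻¹ := by
    rw [hT, show (-2 * (Jσ + Jστ)) = -(Jσ + Jσ + (Jστ + Jστ)) by ring, Real.exp_neg,
      Real.exp_add, Real.exp_add, Real.exp_add]; ring
  have hL1 : L = ((Real.exp Jσ) ^ 2 * (Real.exp Jτ) ^ 2)⁻¹ := by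
    rw [hL, show (-2 * (Jσ + Jτ)) = -(Jσ + Jσ + (Jτ + Jτ)) by ring, Real.exp_neg,
      Real.exp_add, Real.exp_add, Real.exp_add]; ring
  have hcσ : 0 < Real.cosh Jσ := Real.cosh_pos Jσ
  have hcτ : 0 < Real.cosh Jτ := Real.cosh_pos Jτ
  have hcστ : 0 < Real.cosh Jστ := Real.cosh_pos Jστ
  have hsσ : 0 < Real.sinh Jσ := by positivity
  have hsτ : 0 < Real.sinh Jτ := by positivity
  have hsστ : Real.sinh Jστ ≠ 0 := by
    intro hc; exact h5 (Real.sinh_injective (by rw [hc, Real.sinh_zero]))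
  have hcσ2 : Real.cosh Jσ ^ 2 = Real.sinh Jσ ^ 2 + 1 := Real.cosh_sq Jσ
  have hcτ2 : Real.cosh Jτ ^ 2 = Real.sinh Jτ ^ 2 + 1 := Real.cosh_sq Jτ
  have hP3 : 0 < (Real.cosh Jσ * Real.cosh Jτ * Real.sinh Jστ + Real.sinh Jσ * Real.sinh Jτ * Real.cosh Jστ) := by
    have key : (Real.cosh Jσ * Real.cosh Jτ * Real.sinh Jστ + Real.sinh Jσ * Real.sinh Jτ * Real.cosh Jστ) = (Real.cosh Jσ * Real.cosh Jτ * Real.cosh Jστ) *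
        (Real.tanh Jστ + Real.tanh Jσ * Real.tanh Jτ) := by
      rw [Real.tanh_eq_sinh_div_cosh, Real.tanh_eq_sinh_div_cosh,
        Real.tanh_eq_sinh_div_cosh]
      field_simp [hue, hve, hwe]
    rw [key]
    apply mul_pos (by positivity)
    linarith [h4]
  have hP1 : 0 < (Real.sinh Jσ * Real.cosh Jτ * Real.cosh Jστ + Real.cosh Jσ * Real.sinh Jτ * Real.sinh Jστ) := by
    have key : Real.cosh Jτ * (Real.sinh Jσ * Real.cosh Jτ * Real.cosh Jστ + Real.cosh Jσ * Real.sinh Jτ * Real.sinh Jστ) = Real.sinh Jτ * (Real.cosh Jσ * Real.cosh Jτ * Real.sinh Jστ + Real.sinh Jσ * Real.sinh Jτ * Real.cosh Jστ) +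
        Real.sinh Jσ * Real.cosh Jστ * (Real.cosh Jτ ^ 2 - Real.sinh Jτ ^ 2) := by ring
    rw [hcτ2] at key
    have hx1 := mul_pos hsτ hP3
    have hx2 := mul_pos hsσ hcστ
    have hpos : 0 < Real.cosh Jτ * (Real.sinh Jσ * Real.cosh Jτ * Real.cosh Jστ + Real.cosh Jσ * Real.sinh Jτ * Real.sinh Jστ) := by rw [key]; linarith
    have := div_pos hpos hcτ
    rwa [mul_div_cancel_left₀ _ (ne_of_gt hcτ)] at this
  have hP2 : 0 < (Real.cosh Jσ * Real.sinh Jτ * Real.cosh Jστ + Real.sinh Jσ * Real.cosh Jτ * Real.sinh Jστ) := by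
    have key : Real.cosh Jσ * (Real.cosh Jσ * Real.sinh Jτ * Real.cosh Jστ + Real.sinh Jσ * Real.cosh Jτ * Real.sinh Jστ) = Real.sinh Jσ * (Real.cosh Jσ * Real.cosh Jτ * Real.sinh Jστ + Real.sinh Jσ * Real.sinh Jτ * Real.cosh Jστ) +
        Real.sinh Jτ * Real.cosh Jστ * (Real.cosh Jσ ^ 2 - Real.sinh Jσ ^ 2) := by ring
    rw [hcσ2] at key
    have hx1 := mul_pos hsσ hP3
    have hx2 := mul_pos hsτ hcστ
    have hpos : 0 < Real.cosh Jσ * (Real.cosh Jσ * Real.sinh Jτ * Real.cosh Jστ + Real.sinh Jσ * Real.cosh Jτ * Real.sinh Jστ) := by rw [key]; linarith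
    have := div_pos hpos hcσ
    rwa [mul_div_cancel_left₀ _ (ne_of_gt hcσ)] at this
  have hP0 : 0 < (Real.cosh Jσ * Real.cosh Jτ * Real.cosh Jστ + Real.sinh Jσ * Real.sinh Jτ * Real.sinh Jστ) := by
    have key : (Real.cosh Jσ * Real.cosh Jτ) * (Real.cosh Jσ * Real.cosh Jτ * Real.cosh Jστ + Real.sinh Jσ * Real.sinh Jτ * Real.sinh Jστ) = (Real.sinh Jσ * Real.sinh Jτ) * (Real.cosh Jσ * Real.cosh Jτ * Real.sinh Jστ + Real.sinh Jσ * Real.sinh Jτ * Real.cosh Jστ) +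
        Real.cosh Jστ * (Real.cosh Jσ ^ 2 * Real.cosh Jτ ^ 2 - Real.sinh Jσ ^ 2 * Real.sinh Jτ ^ 2) := by ring
    rw [hcσ2, hcτ2] at key
    have hx1 := mul_pos (mul_pos hsσ hsτ) hP3
    have hx2 : (0:ℝ) < Real.cosh Jστ * (Real.sinh Jσ ^ 2 + Real.sinh Jτ ^ 2 + 1) := by
      positivity
    have hpos : 0 < (Real.cosh Jσ * Real.cosh Jτ) * (Real.cosh Jσ * Real.cosh Jτ * Real.cosh Jστ + Real.sinh Jσ * Real.sinh Jτ * Real.sinh Jστ) := by rw [key]; linarith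
    have := div_pos hpos (mul_pos hcσ hcτ)
    rwa [mul_div_cancel_left₀ _ (ne_of_gt (mul_pos hcσ hcτ))] at this
  have hk : (0:ℝ) < ((Real.exp Jσ * Real.exp Jτ * Real.exp Jστ) ^ 2)⁻¹ := by positivity
  have I1 : S - T * L = 4 * ((Real.exp Jσ * Real.exp Jτ * Real.exp Jστ) ^ 2)⁻¹ * ((Real.cosh Jσ * Real.cosh Jτ * Real.cosh Jστ + Real.sinh Jσ * Real.sinh Jτ * Real.sinh Jστ) * (Real.sinh Jσ * Real.cosh Jτ * Real.cosh Jστ + Real.cosh Jσ * Real.sinh Jτ * Real.sinh Jστ) - (Real.cosh Jσ * Real.sinh Jτ * Real.cosh Jστ + Real.sinh Jσ * Real.cosh Jτ * Real.sinh Jστ) * (Real.cosh Jσ * Real.cosh Jτ * Real.sinh Jστ + Real.sinh Jσ * Real.sinh Jτ * Real.cosh Jστ)) := by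
    rw [hS1, hT1, hL1, hcσe, hcτe, hcστe, hsσe, hsτe, hsστe]
    field_simp [hue, hve, hwe]
    ring
  have I2 : T - S * L = 4 * ((Real.exp Jσ * Real.exp Jτ * Real.exp Jστ) ^ 2)⁻¹ * ((Real.cosh Jσ * Real.cosh Jτ * Real.cosh Jστ + Real.sinh Jσ * Real.sinh Jτ * Real.sinh Jστ) * (Real.cosh Jσ * Real.sinh Jτ * Real.cosh Jστ + Real.sinh Jσ * Real.cosh Jτ * Real.sinh Jστ) - (Real.sinh Jσ * Real.cosh Jτ * Real.cosh Jστ + Real.cosh Jσ * Real.sinh Jτ * Real.sinh Jστ) * (Real.cosh Jσ * Real.cosh Jτ * Real.sinh Jστ + Real.sinh Jσ * Real.sinh Jτ * Real.cosh Jστ)) := by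
    rw [hS1, hT1, hL1, hcσe, hcτe, hcστe, hsσe, hsτe, hsστe]
    field_simp [hue, hve, hwe]
    ring
  have I3 : L - S * T = 4 * ((Real.exp Jσ * Real.exp Jτ * Real.exp Jστ) ^ 2)⁻¹ * ((Real.cosh Jσ * Real.cosh Jτ * Real.cosh Jστ + Real.sinh Jσ * Real.sinh Jτ * Real.sinh Jστ) * (Real.cosh Jσ * Real.cosh Jτ * Real.sinh Jστ + Real.sinh Jσ * Real.sinh Jτ * Real.cosh Jστ) - (Real.sinh Jσ * Real.cosh Jτ * Real.cosh Jστ + Real.cosh Jσ * Real.sinh Jτ * Real.sinh Jστ) * (Real.cosh Jσ * Real.sinh Jτ * Real.cosh Jστ + Real.sinh Jσ * Real.cosh Jτ * Real.sinh Jστ)) := by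
    rw [hS1, hT1, hL1, hcσe, hcτe, hcστe, hsσe, hsτe, hsστe]
    field_simp [hue, hve, hwe]
    ring
  have I4 : 1 + S ^ 2 - T ^ 2 - L ^ 2 = 8 * ((Real.exp Jσ * Real.exp Jτ * Real.exp Jστ) ^ 2)⁻¹ * ((Real.cosh Jσ * Real.cosh Jτ * Real.cosh Jστ + Real.sinh Jσ * Real.sinh Jτ * Real.sinh Jστ) * (Real.sinh Jσ * Real.cosh Jτ * Real.cosh Jστ + Real.cosh Jσ * Real.sinh Jτ * Real.sinh Jστ) + (Real.cosh Jσ * Real.sinh Jτ * Real.cosh Jστ + Real.sinh Jσ * Real.cosh Jτ * Real.sinh Jστ) * (Real.cosh Jσ * Real.cosh Jτ * Real.sinh Jστ + Real.sinh Jσ * Real.sinh Jτ * Real.cosh Jστ)) := by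
    rw [hS1, hT1, hL1, hcσe, hcτe, hcστe, hsσe, hsτe, hsστe]
    field_simp [hue, hve, hwe]
    ring
  have I5 : 1 + T ^ 2 - S ^ 2 - L ^ 2 = 8 * ((Real.exp Jσ * Real.exp Jτ * Real.exp Jστ) ^ 2)⁻¹ * ((Real.cosh Jσ * Real.cosh Jτ * Real.cosh Jστ + Real.sinh Jσ * Real.sinh Jτ * Real.sinh Jστ) * (Real.cosh Jσ * Real.sinh Jτ * Real.cosh Jστ + Real.sinh Jσ * Real.cosh Jτ * Real.sinh Jστ) + (Real.sinh Jσ * Real.cosh Jτ * Real.cosh Jστ + Real.cosh Jσ * Real.sinh Jτ * Real.sinh Jστ) * (Real.cosh Jσ * Real.cosh Jτ * Real.sinh Jστ + Real.sinh Jσ * Real.sinh Jτ * Real.cosh Jστ)) := by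
    rw [hS1, hT1, hL1, hcσe, hcτe, hcστe, hsσe, hsτe, hsστe]
    field_simp [hue, hve, hwe]
    ring
  have I6 : 1 + L ^ 2 - S ^ 2 - T ^ 2 = 8 * ((Real.exp Jσ * Real.exp Jτ * Real.exp Jστ) ^ 2)⁻¹ * ((Real.cosh Jσ * Real.cosh Jτ * Real.cosh Jστ + Real.sinh Jσ * Real.sinh Jτ * Real.sinh Jστ) * (Real.cosh Jσ * Real.cosh Jτ * Real.sinh Jστ + Real.sinh Jσ * Real.sinh Jτ * Real.cosh Jστ) + (Real.sinh Jσ * Real.cosh Jτ * Real.cosh Jστ + Real.cosh Jσ * Real.sinh Jτ * Real.sinh Jστ) * (Real.cosh Jσ * Real.sinh Jτ * Real.cosh Jστ + Real.sinh Jσ * Real.cosh Jτ * Real.sinh Jστ)) := by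
    rw [hS1, hT1, hL1, hcσe, hcτe, hcστe, hsσe, hsτe, hsστe]
    field_simp [hue, hve, hwe]
    ring
  have I7 : (1 + S ^ 2 - T ^ 2 - L ^ 2) ^ 2 - 4 * (S - T * L) ^ 2 =
      256 * (((Real.exp Jσ * Real.exp Jτ * Real.exp Jστ) ^ 2)⁻¹) ^ 2 * ((Real.cosh Jσ * Real.cosh Jτ * Real.cosh Jστ + Real.sinh Jσ * Real.sinh Jτ * Real.sinh Jστ) * (Real.sinh Jσ * Real.cosh Jτ * Real.cosh Jστ + Real.cosh Jσ * Real.sinh Jτ * Real.sinh Jστ) * ((Real.cosh Jσ * Real.sinh Jτ * Real.cosh Jστ + Real.sinh Jσ * Real.cosh Jτ * Real.sinh Jστ) * (Real.cosh Jσ * Real.cosh Jτ * Real.sinh Jστ + Real.sinh Jσ * Real.sinh Jτ * Real.cosh Jστ))) := by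
    rw [hS1, hT1, hL1, hcσe, hcτe, hcστe, hsσe, hsτe, hsστe]
    field_simp [hue, hve, hwe]
    ring
  have I8 : (1 + T ^ 2 - S ^ 2 - L ^ 2) ^ 2 - 4 * (T - S * L) ^ 2 =
      256 * (((Real.exp Jσ * Real.exp Jτ * Real.exp Jστ) ^ 2)⁻¹) ^ 2 * ((Real.cosh Jσ * Real.cosh Jτ * Real.cosh Jστ + Real.sinh Jσ * Real.sinh Jτ * Real.sinh Jστ) * (Real.sinh Jσ * Real.cosh Jτ * Real.cosh Jστ + Real.cosh Jσ * Real.sinh Jτ * Real.sinh Jστ) * ((Real.cosh Jσ * Real.sinh Jτ * Real.cosh Jστ + Real.sinh Jσ * Real.cosh Jτ * Real.sinh Jστ) * (Real.cosh Jσ * Real.cosh Jτ * Real.sinh Jστ + Real.sinh Jσ * Real.sinh Jτ * Real.cosh Jστ))) := by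
    rw [hS1, hT1, hL1, hcσe, hcτe, hcστe, hsσe, hsτe, hsστe]
    field_simp [hue, hve, hwe]
    ring
  have I9 : (1 + L ^ 2 - S ^ 2 - T ^ 2) ^ 2 - 4 * (L - S * T) ^ 2 =
      256 * (((Real.exp Jσ * Real.exp Jτ * Real.exp Jστ) ^ 2)⁻¹) ^ 2 * ((Real.cosh Jσ * Real.cosh Jτ * Real.cosh Jστ + Real.sinh Jσ * Real.sinh Jτ * Real.sinh Jστ) * (Real.sinh Jσ * Real.cosh Jτ * Real.cosh Jστ + Real.cosh Jσ * Real.sinh Jτ * Real.sinh Jστ) * ((Real.cosh Jσ * Real.sinh Jτ * Real.cosh Jστ + Real.sinh Jσ * Real.cosh Jτ * Real.sinh Jστ) * (Real.cosh Jσ * Real.cosh Jτ * Real.sinh Jστ + Real.sinh Jσ * Real.sinh Jτ * Real.cosh Jστ))) := by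
    rw [hS1, hT1, hL1, hcσe, hcτe, hcστe, hsσe, hsτe, hsστe]
    field_simp [hue, hve, hwe]
    ring
  have I14 : (Real.cosh Jσ * Real.cosh Jτ * Real.cosh Jστ + Real.sinh Jσ * Real.sinh Jτ * Real.sinh Jστ) * (Real.sinh Jσ * Real.cosh Jτ * Real.cosh Jστ + Real.cosh Jσ * Real.sinh Jτ * Real.sinh Jστ) - (Real.cosh Jσ * Real.sinh Jτ * Real.cosh Jστ + Real.sinh Jσ * Real.cosh Jτ * Real.sinh Jστ) * (Real.cosh Jσ * Real.cosh Jτ * Real.sinh Jστ + Real.sinh Jσ * Real.sinh Jτ * Real.cosh Jστ) = Real.sinh Jσ * Real.cosh Jσ := by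
    rw [hcσe, hcτe, hcστe, hsσe, hsτe, hsστe]
    field_simp [hue, hve, hwe]
    ring
  have I15 : (Real.cosh Jσ * Real.cosh Jτ * Real.cosh Jστ + Real.sinh Jσ * Real.sinh Jτ * Real.sinh Jστ) * (Real.cosh Jσ * Real.sinh Jτ * Real.cosh Jστ + Real.sinh Jσ * Real.cosh Jτ * Real.sinh Jστ) - (Real.sinh Jσ * Real.cosh Jτ * Real.cosh Jστ + Real.cosh Jσ * Real.sinh Jτ * Real.sinh Jστ) * (Real.cosh Jσ * Real.cosh Jτ * Real.sinh Jστ + Real.sinh Jσ * Real.sinh Jτ * Real.cosh Jστ) = Real.sinh Jτ * Real.cosh Jτ := by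
    rw [hcσe, hcτe, hcστe, hsσe, hsτe, hsστe]
    field_simp [hue, hve, hwe]
    ring
  have I16 : (Real.cosh Jσ * Real.cosh Jτ * Real.cosh Jστ + Real.sinh Jσ * Real.sinh Jτ * Real.sinh Jστ) * (Real.cosh Jσ * Real.cosh Jτ * Real.sinh Jστ + Real.sinh Jσ * Real.sinh Jτ * Real.cosh Jστ) - (Real.sinh Jσ * Real.cosh Jτ * Real.cosh Jστ + Real.cosh Jσ * Real.sinh Jτ * Real.sinh Jστ) * (Real.cosh Jσ * Real.sinh Jτ * Real.cosh Jστ + Real.sinh Jσ * Real.cosh Jτ * Real.sinh Jστ) = Real.sinh Jστ * Real.cosh Jστ := by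
    rw [hcσe, hcτe, hcστe, hsσe, hsτe, hsστe]
    field_simp [hue, hve, hwe]
    ring
  have I10 : S * ((Real.cosh Jσ * Real.cosh Jτ * Real.cosh Jστ + Real.sinh Jσ * Real.sinh Jτ * Real.sinh Jστ) + (Real.sinh Jσ * Real.cosh Jτ * Real.cosh Jστ + Real.cosh Jσ * Real.sinh Jτ * Real.sinh Jστ) + (Real.cosh Jσ * Real.sinh Jτ * Real.cosh Jστ + Real.sinh Jσ * Real.cosh Jτ * Real.sinh Jστ) + (Real.cosh Jσ * Real.cosh Jτ * Real.sinh Jστ + Real.sinh Jσ * Real.sinh Jτ * Real.cosh Jστ)) = (Real.cosh Jσ * Real.cosh Jτ * Real.cosh Jστ + Real.sinh Jσ * Real.sinh Jτ * Real.sinh Jστ) + (Real.sinh Jσ * Real.cosh Jτ * Real.cosh Jστ + Real.cosh Jσ * Real.sinh Jτ * Real.sinh Jστ) - (Real.cosh Jσ * Real.sinh Jτ * Real.cosh Jστ + Real.sinh Jσ * Real.cosh Jτ * Real.sinh Jστ) - (Real.cosh Jσ * Real.cosh Jτ * Real.sinh Jστ + Real.sinh Jσ * Real.sinh Jτ * Real.cosh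 Jστ) := by
    rw [hS1, hcσe, hcτe, hcστe, hsσe, hsτe, hsστe]
    field_simp [hue, hve, hwe]
    ring
  have I11 : T * ((Real.cosh Jσ * Real.cosh Jτ * Real.cosh Jστ + Real.sinh Jσ * Real.sinh Jτ * Real.sinh Jστ) + (Real.sinh Jσ * Real.cosh Jτ * Real.cosh Jστ + Real.cosh Jσ * Real.sinh Jτ * Real.sinh Jστ) + (Real.cosh Jσ * Real.sinh Jτ * Real.cosh Jστ + Real.sinh Jσ * Real.cosh Jτ * Real.sinh Jστ) + (Real.cosh Jσ * Real.cosh Jτ * Real.sinh Jστ + Real.sinh Jσ * Real.sinh Jτ * Real.cosh Jστ)) = (Real.cosh Jσ * Real.cosh Jτ * Real.cosh Jστ + Real.sinh Jσ * Real.sinh Jτ * Real.sinh Jστ) - (Real.sinh Jσ * Real.cosh Jτ * Real.cosh Jστ + Real.cosh Jσ * Real.sinh Jτ * Real.sinh Jστ) + (Real.cosh Jσ * Real.sinh Jτ * Real.cosh Jστ + Real.sinh Jσ * Real.cosh Jτ * Real.sinh Jστ) - (Real.cosh Jσ * Real.cosh Jτ * Real.sinh Jστ + Real.sinh Jσ *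 Real.sinh Jτ * Real.cosh Jστ) := by
    rw [hT1, hcσe, hcτe, hcστe, hsσe, hsτe, hsστe]
    field_simp [hue, hve, hwe]
    ring
  have I12 : L * ((Real.cosh Jσ * Real.cosh Jτ * Real.cosh Jστ + Real.sinh Jσ * Real.sinh Jτ * Real.sinh Jστ) + (Real.sinh Jσ * Real.cosh Jτ * Real.cosh Jστ + Real.cosh Jσ * Real.sinh Jτ * Real.sinh Jστ) + (Real.cosh Jσ * Real.sinh Jτ * Real.cosh Jστ + Real.sinh Jσ * Real.cosh Jτ * Real.sinh Jστ) + (Real.cosh Jσ * Real.cosh Jτ * Real.sinh Jστ + Real.sinh Jσ * Real.sinh Jτ * Real.cosh Jστ)) = (Real.cosh Jσ * Real.cosh Jτ * Real.cosh Jστ + Real.sinh Jσ * Real.sinh Jτ * Real.sinh Jστ) - (Real.sinh Jσ * Real.cosh Jτ * Real.cosh Jστ + Real.cosh Jσ * Real.sinh Jτ * Real.sinh Jστ) - (Real.cosh Jσ * Real.sinh Jτ * Real.cosh Jστ + Real.sinh Jσ * Real.cosh Jτ * Real.sinh Jστ) + (Real.cosh Jσ * Real.cosh Jτ * Real.sinh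 Jστ + Real.sinh Jσ * Real.sinh Jτ * Real.cosh Jστ) := by
    rw [hL1, hcσe, hcτe, hcστe, hsσe, hsτe, hsστe]
    field_simp [hue, hve, hwe]
    ring
  -- abstract away the hyperbolic expressions
  obtain ⟨P0, hP0d⟩ : ∃ x, x = (Real.cosh Jσ * Real.cosh Jτ * Real.cosh Jστ + Real.sinh Jσ * Real.sinh Jτ * Real.sinh Jστ) := ⟨_, rfl⟩
  obtain ⟨P1, hP1d⟩ : ∃ x, x = (Real.sinh Jσ * Real.cosh Jτ * Real.cosh Jστ + Real.cosh Jσ * Real.sinh Jτ * Real.sinh Jστ) := ⟨_, rfl⟩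
  obtain ⟨P2, hP2d⟩ : ∃ x, x = (Real.cosh Jσ * Real.sinh Jτ * Real.cosh Jστ + Real.sinh Jσ * Real.cosh Jτ * Real.sinh Jστ) := ⟨_, rfl⟩
  obtain ⟨P3, hP3d⟩ : ∃ x, x = (Real.cosh Jσ * Real.cosh Jτ * Real.sinh Jστ + Real.sinh Jσ * Real.sinh Jτ * Real.cosh Jστ) := ⟨_, rfl⟩
  obtain ⟨k, hkd⟩ : ∃ x, x = ((Real.exp Jσ * Real.exp Jτ * Real.exp Jστ) ^ 2)⁻¹ := ⟨_, rfl⟩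
  obtain ⟨W, hWd⟩ : ∃ x, x = Real.sinh Jσ * Real.cosh Jσ := ⟨_, rfl⟩
  obtain ⟨V, hVd⟩ : ∃ x, x = Real.sinh Jτ * Real.cosh Jτ := ⟨_, rfl⟩
  obtain ⟨U, hUd⟩ : ∃ x, x = Real.sinh Jστ * Real.cosh Jστ := ⟨_, rfl⟩
  rw [← hkd] at hk I1 I2 I3 I4 I5 I6 I7 I8 I9
  rw [← hP0d, ← hP1d, ← hP2d, ← hP3d] at I1 I2 I3 I4 I5 I6 I7 I8 I9 I10 I11 I12 I14 I15 I16
  rw [← hP0d] at hP0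
  rw [← hP1d] at hP1
  rw [← hP2d] at hP2
  rw [← hP3d] at hP3
  rw [← hWd] at I14
  rw [← hVd] at I15
  rw [← hUd] at I16
  have hW : 0 < W := by rw [hWd]; positivity
  have hV : 0 < V := by rw [hVd]; positivity
  have hU : U ≠ 0 := by rw [hUd]; exact mul_ne_zero hsστ hcστ.ne'
  clear hWd hVd hUd hP0d hP1d hP2d hP3d hkd
  -- square roots
  obtain ⟨p0, hp0d⟩ : ∃ x, x = Real.sqrt P0 := ⟨_, rfl⟩
  obtain ⟨p1, hp1d⟩ : ∃ x, x = Real.sqrt P1 := ⟨_, rfl⟩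
  obtain ⟨p2, hp2d⟩ : ∃ x, x = Real.sqrt P2 := ⟨_, rfl⟩
  obtain ⟨p3, hp3d⟩ : ∃ x, x = Real.sqrt P3 := ⟨_, rfl⟩
  have hq0 : p0 ^ 2 = P0 := by rw [hp0d]; exact Real.sq_sqrt hP0.le
  have hq1 : p1 ^ 2 = P1 := by rw [hp1d]; exact Real.sq_sqrt hP1.le
  have hq2 : p2 ^ 2 = P2 := by rw [hp2d]; exact Real.sq_sqrt hP2.le
  have hq3 : p3 ^ 2 = P3 := by rw [hp3d]; exact Real.sq_sqrt hP3.le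
  have hpp0 : 0 < p0 := by rw [hp0d]; exact Real.sqrt_pos.mpr hP0
  have hpp1 : 0 < p1 := by rw [hp1d]; exact Real.sqrt_pos.mpr hP1
  have hpp2 : 0 < p2 := by rw [hp2d]; exact Real.sqrt_pos.mpr hP2
  have hpp3 : 0 < p3 := by rw [hp3d]; exact Real.sqrt_pos.mpr hP3
  have hrtval : 256 * k ^ 2 * (P0 * P1 * (P2 * P3)) = (16 * k * (p0 * p1 * (p2 * p3))) ^ 2 := by
    rw [← hq0, ← hq1, ← hq2, ← hq3]; ring
  have hrtpos : (0:ℝ) ≤ 16 * k * (p0 * p1 * (p2 * p3)) :=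
    le_of_lt (mul_pos (mul_pos (by norm_num : (0:ℝ) < 16) hk)
      (mul_pos (mul_pos hpp0 hpp1) (mul_pos hpp2 hpp3)))
  have hrt1 : Real.sqrt ((1 + S ^ 2 - T ^ 2 - L ^ 2) ^ 2 - 4 * (S - T * L) ^ 2) =
      16 * k * (p0 * p1 * (p2 * p3)) := by
    rw [I7, hrtval, Real.sqrt_sq hrtpos]
  have hrt2 : Real.sqrt ((1 + T ^ 2 - S ^ 2 - L ^ 2) ^ 2 - 4 * (T - S * L) ^ 2) =
      16 * k * (p0 * p1 * (p2 * p3)) := by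
    rw [I8, hrtval, Real.sqrt_sq hrtpos]
  have hrt3 : Real.sqrt ((1 + L ^ 2 - S ^ 2 - T ^ 2) ^ 2 - 4 * (L - S * T) ^ 2) =
      16 * k * (p0 * p1 * (p2 * p3)) := by
    rw [I9, hrtval, Real.sqrt_sq hrtpos]
  have J1 : p0 ^ 2 * p1 ^ 2 - p2 ^ 2 * p3 ^ 2 = W := by rw [hq0, hq1, hq2, hq3]; exact I14
  have J2 : p0 ^ 2 * p2 ^ 2 - p1 ^ 2 * p3 ^ 2 = V := by rw [hq0, hq1, hq2, hq3]; exact I15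
  have J3 : p0 ^ 2 * p3 ^ 2 - p1 ^ 2 * p2 ^ 2 = U := by rw [hq0, hq1, hq2, hq3]; exact I16
  have hJ1pos : 0 < p0 ^ 2 * p1 ^ 2 - p2 ^ 2 * p3 ^ 2 := by rw [J1]; exact hW
  have hJ2pos : 0 < p0 ^ 2 * p2 ^ 2 - p1 ^ 2 * p3 ^ 2 := by rw [J2]; exact hV
  have hJ3ne : p0 ^ 2 * p3 ^ 2 - p1 ^ 2 * p2 ^ 2 ≠ 0 := by rw [J3]; exact hU
  have hs' : s = (p0 * p1 - p2 * p3) / (p0 * p1 + p2 * p3) := by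
    rw [hs, hrt1, I4, I1, ← hq0, ← hq1, ← hq2, ← hq3]
    rw [div_eq_div_iff
      (ne_of_gt (mul_pos (by norm_num : (0:ℝ) < 2)
        (mul_pos (mul_pos (by norm_num : (0:ℝ) < 4) hk) hJ1pos)))
      (by positivity)]
    ring
  have ht' : t = (p0 * p2 - p1 * p3) / (p0 * p2 + p1 * p3) := by
    rw [ht, hrt2, I5, I2, ← hq0, ← hq1, ← hq2, ← hq3]
    rw [div_eq_div_iff
      (ne_of_gt (mul_pos (by norm_num : (0:ℝ) < 2)
        (mul_pos (mul_pos (by norm_num : (0:ℝ) < 4) hk) hJ2pos)))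
      (by positivity)]
    ring
  have hl' : l = (p0 * p3 - p1 * p2) / (p0 * p3 + p1 * p2) := by
    rw [hl, hrt3, I6, I3, ← hq0, ← hq1, ← hq2, ← hq3]
    rw [div_eq_div_iff
      (mul_ne_zero (by norm_num : (2:ℝ) ≠ 0)
        (mul_ne_zero (mul_ne_zero (by norm_num : (4:ℝ) ≠ 0) hk.ne') hJ3ne))
      (by positivity)]
    ring
  -- bounds
  have hgt1 : p2 * p3 < p0 * p1 := by
    apply lt_of_pow_lt_pow_left₀ 2 (by positivity)
    rw [show (p0 * p1) ^ 2 = p0 ^ 2 * p1 ^ 2 by ring, show (p2 * p3) ^ 2 = p2 ^ 2 * p3 ^ 2 by ring]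
    linarith [hJ1pos]
  have hgt2 : p1 * p3 < p0 * p2 := by
    apply lt_of_pow_lt_pow_left₀ 2 (by positivity)
    rw [show (p0 * p2) ^ 2 = p0 ^ 2 * p2 ^ 2 by ring, show (p1 * p3) ^ 2 = p1 ^ 2 * p3 ^ 2 by ring]
    linarith [hJ2pos]
  have hs0 : 0 ≤ s := by
    rw [hs']; exact div_nonneg (by linarith) (by positivity)
  have hs1 : s < 1 := by
    rw [hs', div_lt_one (by positivity)]
    linarith [mul_pos hpp2 hpp3]
  have ht0 : 0 ≤ t := by
    rw [ht']; exact div_nonneg (by linarith) (by positivity)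
  have ht1 : t < 1 := by
    rw [ht', div_lt_one (by positivity)]
    linarith [mul_pos hpp1 hpp3]
  have hlm1 : -1 < l := by
    rw [hl', lt_div_iff₀ (by positivity)]
    linarith [mul_pos hpp0 hpp3]
  have hl1 : l < 1 := by
    rw [hl', div_lt_one (by positivity)]
    linarith [mul_pos hpp1 hpp2]
  have hden : 0 < 1 + s * t * l := by
    have hst0 : 0 ≤ s * t := mul_nonneg hs0 ht0
    have hst1 : s * t < 1 := lt_of_le_of_lt (mul_le_of_le_one_right hs0 ht1.le) hs1
    linarith [mul_nonneg hst0 (by linarith : (0:ℝ) ≤ l + 1), hst1]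
  have hsum : 0 < P0 + P1 + P2 + P3 := by linarith
  have hS2 : S = (p0 ^ 2 + p1 ^ 2 - p2 ^ 2 - p3 ^ 2) / (p0 ^ 2 + p1 ^ 2 + p2 ^ 2 + p3 ^ 2) := by
    rw [eq_div_iff (by positivity), hq0, hq1, hq2, hq3]
    linarith [I10]
  have hT2 : T = (p0 ^ 2 - p1 ^ 2 + p2 ^ 2 - p3 ^ 2) / (p0 ^ 2 + p1 ^ 2 + p2 ^ 2 + p3 ^ 2) := by
    rw [eq_div_iff (by positivity), hq0, hq1, hq2, hq3]
    linarith [I11]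
  have hL2 : L = (p0 ^ 2 - p1 ^ 2 - p2 ^ 2 + p3 ^ 2) / (p0 ^ 2 + p1 ^ 2 + p2 ^ 2 + p3 ^ 2) := by
    rw [eq_div_iff (by positivity), hq0, hq1, hq2, hq3]
    linarith [I12]
  refine ⟨⟨hs0, hs1⟩, ⟨ht0, ht1⟩, ⟨hlm1, hl1⟩, ?_, ?_, ?_⟩
  · rw [eq_div_iff hden.ne', hS2, hs', ht', hl']
    field_simp [hue, hve, hwe]
    ring
  · rw [eq_div_iff hden.ne', hT2, hs', ht', hl']
    field_simp [hue, hve, hwe]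
    ring
  · rw [eq_div_iff hden.ne', hL2, hs', ht', hl']
    field_simp [hue, hve, hwe]
    ring
end

section
/- For Jσ, Jτ, Jστ ∈ ℝ define a0 = e^{−2(Jσ+Jτ)}, aσ = e^{−2Jτ}(e^{−2Jστ} − e^{−2Jσ}), aτ = e^{−2Jσ}(e^{−2Jστ} − e^{−2Jτ}), aστ = 1 − e^{−2(Jσ+Jστ)} − e^{−2(Jτ+Jστ)} + e^{−2(Jσ+Jτ)}. Then a0 + aσ + aτ + aστ = 1, a0 > 0, and the four numbers a0, aσ, aτ, aστ are all nonnegative (hence define a probability distribution on {0,1}×{0,1}) if and only if Jσ ≥ Jστ, Jτ ≥ Jστ and tanh Jστ ≥ − tanh Jσ · tanh Jτ. -/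
/-! Writing `u, v, w` for `exp (-2 Jσ), exp (-2 Jτ), exp (-2 Jστ)`, the weights are polynomials in
`u, v, w` summing to one. `aσ = v (w - u)` has the sign of `Jσ - Jστ`, and similarly for `aτ`.
Since `tanh x = (1 - e^{-2x}) / (1 + e^{-2x})`, clearing denominators gives
`tanh Jστ + tanh Jσ tanh Jτ = 2 aστ / ((1 + u)(1 + v)(1 + w))`, so `aστ` has the sign of
`tanh Jστ + tanh Jσ tanh Jτ`. -/
open Real

theorem tanh_eq_one_sub_exp_div_one_add_exp (x : ℝ) :
    tanh x = (1 - exp (-2 * x)) / (1 + exp (-2 * x)) := by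
  have hx : exp (-2 * x) = exp (-x) / exp x := by rw [← exp_sub]; ring_nf
  rw [tanh_eq_sinh_div_cosh, sinh_eq, cosh_eq, hx]
  field_simp

theorem tanh_mul_tanh_add_tanh (a b c : ℝ) :
    tanh a * tanh b + tanh c =
      2 * (1 - exp (-2 * (a + c)) - exp (-2 * (b + c)) + exp (-2 * (a + b))) /
        ((1 + exp (-2 * a)) * (1 + exp (-2 * b)) * (1 + exp (-2 * c))) := by
  simp only [tanh_eq_one_sub_exp_div_one_add_exp, mul_add, exp_add]
  have := exp_pos (-2 * a); have := exp_pos (-2 * b); have := exp_pos (-2 * c)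
  field_simp
  ring

theorem neg_tanh_mul_tanh_le_tanh_iff (a b c : ℝ) :
    -(tanh a * tanh b) ≤ tanh c ↔
      0 ≤ 1 - exp (-2 * (a + c)) - exp (-2 * (b + c)) + exp (-2 * (a + b)) := by
  rw [neg_le_iff_add_nonneg', tanh_mul_tanh_add_tanh, le_div_iff₀ (by positivity), zero_mul,
    mul_nonneg_iff_of_pos_left two_pos]

theorem exp_mul_sub_exp_nonneg_iff (c a b : ℝ) :
    0 ≤ exp c * (exp (-2 * b) - exp (-2 * a)) ↔ b ≤ a := by
  rw [mul_nonneg_iff_of_pos_left (exp_pos c), sub_nonneg, exp_le_exp]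
  constructor <;> intro h <;> linarith

/-- The random-cluster weights `a0, aσ, aτ, aστ` of the Ashkin–Teller model
sum to 1, `a0 > 0`, and they are all nonnegative iff `Jσ ≥ Jστ`, `Jτ ≥ Jστ` and
`tanh Jστ ≥ -tanh Jσ · tanh Jτ`. -/
theorem stmt5 (Jσ Jτ Jστ : ℝ)
    (a0 aσ aτ aστ : ℝ)
    (ha0 : a0 = Real.exp (-2 * (Jσ + Jτ)))
    (haσ : aσ = Real.exp (-2 * Jτ) * (Real.exp (-2 * Jστ) - Real.exp (-2 * Jσ)))
    (haτ : aτ = Real.exp (-2 * Jσ) * (Real.exp (-2 * Jστ) - Real.exp (-2 * Jτ)))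
    (haστ : aστ = 1 - Real.exp (-2 * (Jσ + Jστ)) - Real.exp (-2 * (Jτ + Jστ)) +
        Real.exp (-2 * (Jσ + Jτ))) :
    a0 + aσ + aτ + aστ = 1 ∧
    0 < a0 ∧
    ((0 ≤ a0 ∧ 0 ≤ aσ ∧ 0 ≤ aτ ∧ 0 ≤ aστ) ↔
      (Jσ ≥ Jστ ∧ Jτ ≥ Jστ ∧
        Real.tanh Jστ ≥ -(Real.tanh Jσ * Real.tanh Jτ))) := by
  subst ha0 haσ haτ haστ
  refine ⟨?_, exp_pos _, ?_⟩
  · simp only [mul_add, exp_add]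
    ring
  · simp only [ge_iff_le, exp_mul_sub_exp_nonneg_iff, neg_tanh_mul_tanh_le_tanh_iff,
      (exp_pos _).le, true_and]
end

section
/- For all Jσ, Jτ, Jστ ∈ ℝ and all σi, σj, τi, τj ∈ {−1, 1}: exp(Jσ σiσj + Jτ τiτj + Jστ σiσjτiτj) = cosh Jσ · cosh Jτ · cosh Jστ · (1 + stl) · (1 + S σiσj + T τiτj + L σiσjτiτj), where s = tanh Jσ, t = tanh Jτ, l = tanh Jστ, S = (s+tl)/(1+stl), T = (t+sl)/(1+stl), L = (l+st)/(1+stl). -/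
/-!
Writing `a = σᵢσⱼ`, `b = τᵢτⱼ` (both `±1`), each factor of the Boltzmann weight satisfies
`exp (J ε) = cosh J (1 + tanh J · ε)` for `ε = ±1`. Multiplying the three factors out and using
`a² = b² = 1` gives `(1 + stl) + (s + tl) a + (t + sl) b + (l + st) ab`, and `1 + stl > 0`
because `|tanh| < 1`, so it may be pulled out as a common factor.
-/

open Real

lemma mul_eq_one_or_neg_one {x y : ℝ} (hx : x = 1 ∨ x = -1) (hy : y = 1 ∨ y = -1) :
    x * y = 1 ∨ x * y = -1 := by
  rcases hx with rfl | rfl <;> rcases hy with rfl | rfl <;> norm_num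

lemma Real.exp_mul_eq_cosh_mul_one_add_tanh_mul (J : ℝ) {ε : ℝ} (hε : ε = 1 ∨ ε = -1) :
    exp (J * ε) = cosh J * (1 + tanh J * ε) := by
  rw [tanh_eq_sinh_div_cosh, mul_add, mul_one, ← mul_assoc, mul_div_cancel₀ _ (cosh_pos J).ne']
  rcases hε with rfl | rfl
  · rw [mul_one, mul_one, cosh_add_sinh]
  · rw [mul_neg_one, mul_neg_one, ← sub_eq_add_neg, cosh_sub_sinh]

lemma one_add_mul_mul_pos {x y z : ℝ} (hx : |x| < 1) (hy : |y| < 1) (hz : |z| < 1) :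
    0 < 1 + x * y * z := by
  have hxyz : |x * y * z| < 1 := by
    rw [abs_mul, abs_mul]
    exact mul_lt_one_of_nonneg_of_lt_one_left (by positivity)
      (mul_lt_one_of_nonneg_of_lt_one_left (abs_nonneg x) hx hy.le) hz.le
  linarith [neg_abs_le (x * y * z)]

lemma one_add_mul_mul_one_add_mul_mul_one_add_mul {R : Type*} [CommRing R] (s t l a b : R)
    (ha : a * a = 1) (hb : b * b = 1) :
    (1 + s * a) * (1 + t * b) * (1 + l * (a * b)) =
      (1 + s * t * l) + (s + t * l) * a + (t + s * l) * b + (l + s * t) * (a * b) := by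
  linear_combination (s * l * b + s * t * l) * ha + (t * l * a + s * t * l * a * a) * hb

/-- the per-bond high-temperature decomposition of the Ashkin–Teller
Boltzmann weight:
`exp(Jσ σiσj + Jτ τiτj + Jστ σiσjτiτj)
  = cosh Jσ cosh Jτ cosh Jστ (1+stl)(1 + S σiσj + T τiτj + L σiσjτiτj)`. -/
theorem stmt8 (Jσ Jτ Jστ σi σj τi τj : ℝ)
    (hσi : σi = 1 ∨ σi = -1) (hσj : σj = 1 ∨ σj = -1)
    (hτi : τi = 1 ∨ τi = -1) (hτj : τj = 1 ∨ τj = -1) :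
    Real.exp (Jσ * (σi * σj) + Jτ * (τi * τj) + Jστ * (σi * σj * τi * τj)) =
      Real.cosh Jσ * Real.cosh Jτ * Real.cosh Jστ *
        (1 + Real.tanh Jσ * Real.tanh Jτ * Real.tanh Jστ) *
        (1 +
          (Real.tanh Jσ + Real.tanh Jτ * Real.tanh Jστ) /
            (1 + Real.tanh Jσ * Real.tanh Jτ * Real.tanh Jστ) * (σi * σj) +
          (Real.tanh Jτ + Real.tanh Jσ * Real.tanh Jστ) /
            (1 + Real.tanh Jσ * Real.tanh Jτ * Real.tanh Jστ) * (τi * τj) +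
          (Real.tanh Jστ + Real.tanh Jσ * Real.tanh Jτ) /
            (1 + Real.tanh Jσ * Real.tanh Jτ * Real.tanh Jστ) *
            (σi * σj * τi * τj)) := by
  have hstl : 1 + tanh Jσ * tanh Jτ * tanh Jστ ≠ 0 :=
    (one_add_mul_mul_pos (abs_tanh_lt_one _) (abs_tanh_lt_one _) (abs_tanh_lt_one _)).ne'
  have ha := mul_eq_one_or_neg_one hσi hσj
  have hb := mul_eq_one_or_neg_one hτi hτj
  have hab := mul_eq_one_or_neg_one ha hb
  rw [show σi * σj * τi * τj = σi * σj * (τi * τj) by ring, exp_add, exp_add,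
    exp_mul_eq_cosh_mul_one_add_tanh_mul _ ha, exp_mul_eq_cosh_mul_one_add_tanh_mul _ hb,
    exp_mul_eq_cosh_mul_one_add_tanh_mul _ hab]
  calc _ = cosh Jσ * cosh Jτ * cosh Jστ *
        ((1 + tanh Jσ * (σi * σj)) * (1 + tanh Jτ * (τi * τj)) *
          (1 + tanh Jστ * (σi * σj * (τi * τj)))) := by ring
    _ = _ := by
      rw [one_add_mul_mul_one_add_mul_mul_one_add_mul _ _ _ _ _
        (mul_self_eq_one_iff.mpr ha) (mul_self_eq_one_iff.mpr hb)]
      field_simp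
end

section
/- Let G be a finite simple graph with vertex set V and edge set E, and let Jσ, Jτ, Jστ ∈ ℝ. Then Σ_{(σ,τ) : V → {−1,1}²} ∏_{{i,j} ∈ E} exp(Jσ σ(i)σ(j) + Jτ τ(i)τ(j) + Jστ σ(i)σ(j)τ(i)τ(j)) = e^{(Jσ+Jτ+Jστ)·|E|} · Σ_{n=(nσ,nτ) : E → {0,1}²} λ(n) · 2^{Nσ(n)} · 2^{Nτ(n)}, where λ(n) = ∏_{e∈E} (a0 if n(e)=(0,0), aσ if n(e)=(1,0), aτ if n(e)=(0,1), aστ if n(e)=(1,1)), with a0 = e^{−2(Jσ+Jτ)}, aσ = e^{−2Jτ}(e^{−2Jστ} − e^{−2Jσ}), aτ = e^{−2Jσ}(e^{−2Jστ} − e^{−2Jτ}), aστ = 1 − e^{−2(Jσ+Jστ)} − e^{−2(Jτ+Jστ)} + e^{−2(Jσ+Jτ)}. -/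
/-!
Write `δσ(e)`, `δτ(e)` for the indicators that `σ`, resp. `τ`, takes the same value at the two
ends of the edge `e`. For `±1` spins, `e^{-(Jσ+Jτ+Jστ)}` times the Boltzmann weight of `e` depends
only on `(δσ(e), δτ(e))`, and it equals `∑_{b ∈ {0,1}²} a_b δσ(e)^{b.1} δτ(e)^{b.2}`: the
coefficients `a0, aσ, aτ, aστ` are the solution of this triangular system. Expanding the product
over the edges turns the partition function into a sum over bond configurations `n`; for fixed
`n`, the remaining sum over spins counts the `σ` constant on the clusters of `nσ` and the `τ`
constant on the clusters of `nτ`, that is `2^{Nσ(n)} · 2^{Nτ(n)}`.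
-/

/-- The spin value `±1` attached to a Boolean. -/
def spin (b : Bool) : ℝ := if b then 1 else -1

/-- The number of connected components of the spanning subgraph of the vertex set `V`
with edge set `F`; isolated vertices count as components. -/
noncomputable def numComp {V : Type*} [Fintype V] (F : Set (Sym2 V)) : ℕ :=
  Nat.card (SimpleGraph.fromEdgeSet F).ConnectedComponent

/-- The Ashkin–Teller Boltzmann weight of an edge, as a function on `Sym2 V`. -/
noncomputable def atWeight {V : Type*} (Jσ Jτ Jστ : ℝ) (σ τ : V → ℝ) : Sym2 V → ℝ :=
  Sym2.lift ⟨fun i j =>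
      Real.exp (Jσ * (σ i * σ j) + Jτ * (τ i * τ j) + Jστ * (σ i * σ j * (τ i * τ j))),
    fun i j => by ring_nf⟩

/-- The weight of an edge state: `(0,0) ↦ a0`, `(1,0) ↦ aσ`, `(0,1) ↦ aτ`, `(1,1) ↦ aστ`. -/
def wt (a0 aσ aτ aστ : ℝ) : Bool × Bool → ℝ
  | (false, false) => a0
  | (true, false) => aσ
  | (false, true) => aτ
  | (true, true) => aστ

/-- The set of edges of `G` declared open by `m`. -/
def openEdges {V : Type*} [Fintype V] [DecidableEq V] (G : SimpleGraph V)
    [DecidableRel G.Adj] (m : G.edgeFinset → Bool) : Set (Sym2 V) :=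
  {e : Sym2 V | ∃ h : e ∈ G.edgeFinset, m ⟨e, h⟩ = true}

/-- Number of clusters of the spanning subgraph with open edges `m`. -/
noncomputable def Ncl {V : Type*} [Fintype V] [DecidableEq V] (G : SimpleGraph V)
    [DecidableRel G.Adj] (m : G.edgeFinset → Bool) : ℕ :=
  numComp (openEdges G m)


namespace SimpleGraph

variable {V α : Type*} {H : SimpleGraph V}

lemma Reachable.apply_eq_of_adj {f : V → α} (hf : ∀ v w, H.Adj v w → f v = f w) {v w : V}
    (h : H.Reachable v w) : f v = f w := by
  rw [reachable_iff_reflTransGen] at h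
  induction h with
  | refl => rfl
  | tail _ hadj ih => exact ih.trans (hf _ _ hadj)

def adjInvariantEquiv (H : SimpleGraph V) (α : Type*) :
    {f : V → α // ∀ v w, H.Adj v w → f v = f w} ≃ (H.ConnectedComponent → α) where
  toFun f := ConnectedComponent.lift f.1 fun _ _ p _ => p.reachable.apply_eq_of_adj f.2
  invFun g := ⟨fun v => g (H.connectedComponentMk v), fun _ _ h =>
    congrArg g (ConnectedComponent.sound h.reachable)⟩
  left_inv _ := rfl
  right_inv _ := funext <| ConnectedComponent.ind fun _ => rfl

lemma card_adjInvariant [Finite V] (H : SimpleGraph V) (α : Type*) :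
    Nat.card {f : V → α // ∀ v w, H.Adj v w → f v = f w}
      = Nat.card α ^ Nat.card H.ConnectedComponent := by
  rw [Nat.card_congr (adjInvariantEquiv H α), Nat.card_fun]

end SimpleGraph

section Clusters

variable {V : Type*} [Fintype V] [DecidableEq V] (G : SimpleGraph V) [DecidableRel G.Adj]

lemma forall_isDiag_map_iff_adj (m : G.edgeFinset → Bool) {α : Type*} (f : V → α) :
    (∀ e : G.edgeFinset, m e = true → (e.1.map f).IsDiag) ↔
      ∀ v w, (SimpleGraph.fromEdgeSet (openEdges G m)).Adj v w → f v = f w := by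
  constructor
  · intro h v w hadj
    obtain ⟨⟨he, hm⟩, -⟩ := (SimpleGraph.fromEdgeSet_adj _).1 hadj
    simpa using h ⟨s(v, w), he⟩ hm
  · rintro h ⟨e, he⟩ hm
    induction e using Sym2.ind with
    | _ v w =>
      rw [Sym2.map_mk, Sym2.mk_isDiag_iff]
      by_cases hvw : v = w
      · rw [hvw]
      · exact h v w ((SimpleGraph.fromEdgeSet_adj _).2 ⟨⟨he, hm⟩, hvw⟩)

lemma sum_prod_ite_isDiag_map (m : G.edgeFinset → Bool) :
    ∑ σ : V → Bool, ∏ e : G.edgeFinset, (if m e = true → (e.1.map σ).IsDiag then (1 : ℝ) else 0)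
      = 2 ^ Ncl G m := by
  classical
  simp_rw [Fintype.prod_boole, forall_isDiag_map_iff_adj, Finset.sum_boole]
  rw [← Fintype.card_subtype, ← Nat.card_eq_fintype_card, SimpleGraph.card_adjInvariant]
  simp [Ncl, numComp]

lemma sum_prod_ite_isDiag_map_pair (n : G.edgeFinset → Bool × Bool) :
    ∑ στ : (V → Bool) × (V → Bool),
        (∏ e : G.edgeFinset, if (n e).1 → (e.1.map στ.1).IsDiag then (1 : ℝ) else 0) *
          ∏ e : G.edgeFinset, (if (n e).2 → (e.1.map στ.2).IsDiag then (1 : ℝ) else 0)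
      = 2 ^ Ncl G (fun e => (n e).1) * 2 ^ Ncl G (fun e => (n e).2) := by
  rw [Fintype.sum_prod_type]
  simp only [← Finset.sum_mul_sum, sum_prod_ite_isDiag_map]

end Clusters

noncomputable def atBondWeight (Jσ Jτ Jστ : ℝ) : Bool × Bool → ℝ :=
  wt (Real.exp (-2 * (Jσ + Jτ)))
    (Real.exp (-2 * Jτ) * (Real.exp (-2 * Jστ) - Real.exp (-2 * Jσ)))
    (Real.exp (-2 * Jσ) * (Real.exp (-2 * Jστ) - Real.exp (-2 * Jτ)))
    (1 - Real.exp (-2 * (Jσ + Jστ)) - Real.exp (-2 * (Jτ + Jστ)) + Real.exp (-2 * (Jσ + Jτ)))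

lemma spin_mul_spin (a b : Bool) : spin a * spin b = spin (decide (a = b)) := by
  cases a <;> cases b <;> norm_num [spin]

lemma exp_spin_eq_sum_atBondWeight (Jσ Jτ Jστ : ℝ) (p q : Prop) [Decidable p] [Decidable q] :
    Real.exp (Jσ * spin (decide p) + Jτ * spin (decide q) +
        Jστ * (spin (decide p) * spin (decide q)))
      = Real.exp (Jσ + Jτ + Jστ) * ∑ b : Bool × Bool, atBondWeight Jσ Jτ Jστ b *
          ((if b.1 → p then 1 else 0) * (if b.2 → q then 1 else 0)) := by
  by_cases hp : p <;> by_cases hq : q <;>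
    simp [hp, hq, spin, atBondWeight, wt, Fintype.sum_prod_type, mul_add, mul_sub,
      ← Real.exp_add] <;> ring_nf

section Expansion

variable {V : Type*} (Jσ Jτ Jστ : ℝ)

lemma atWeight_spin_eq_sum (σ τ : V → Bool) (e : Sym2 V) :
    atWeight Jσ Jτ Jστ (fun i => spin (σ i)) (fun i => spin (τ i)) e
      = Real.exp (Jσ + Jτ + Jστ) * ∑ b : Bool × Bool, atBondWeight Jσ Jτ Jστ b *
          ((if b.1 → (e.map σ).IsDiag then 1 else 0) *
            (if b.2 → (e.map τ).IsDiag then 1 else 0)) := by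
  induction e using Sym2.ind with
  | _ i j =>
    simp only [atWeight, Sym2.lift_mk, Sym2.map_mk, Sym2.mk_isDiag_iff,
      spin_mul_spin (σ i), spin_mul_spin (τ i)]
    exact exp_spin_eq_sum_atBondWeight Jσ Jτ Jστ (σ i = σ j) (τ i = τ j)

variable [Fintype V] [DecidableEq V] (G : SimpleGraph V) [DecidableRel G.Adj]

lemma prod_atWeight_spin_eq_sum (σ τ : V → Bool) :
    ∏ e ∈ G.edgeFinset, atWeight Jσ Jτ Jστ (fun i => spin (σ i)) (fun i => spin (τ i)) e
      = Real.exp (Jσ + Jτ + Jστ) ^ G.edgeFinset.card * ∑ n : G.edgeFinset → Bool × Bool,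
          ∏ e : G.edgeFinset, atBondWeight Jσ Jτ Jστ (n e) *
            ((if (n e).1 → (e.1.map σ).IsDiag then 1 else 0) *
              (if (n e).2 → (e.1.map τ).IsDiag then 1 else 0)) := by
  rw [← Finset.prod_coe_sort]
  simp only [atWeight_spin_eq_sum, Finset.prod_mul_distrib, Finset.prod_const, Fintype.prod_sum]
  simp

end Expansion

/-- the Ashkin–Teller partition function with free boundary condition
equals `e^{(Jσ+Jτ+Jστ)|E|}` times the generalized random-cluster partition function
with weights `a0, aσ, aτ, aστ` and `qσ = qτ = 2`. -/
theorem stmt10 {V : Type*} [Fintype V] [DecidableEq V] (G : SimpleGraph V)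
    [DecidableRel G.Adj] (Jσ Jτ Jστ : ℝ) :
    ∑ στ : (V → Bool) × (V → Bool),
        ∏ e ∈ G.edgeFinset, atWeight Jσ Jτ Jστ (fun i => spin (στ.1 i)) (fun i => spin (στ.2 i)) e
    = Real.exp ((Jσ + Jτ + Jστ) * (G.edgeFinset.card : ℝ)) *
      ∑ n : G.edgeFinset → Bool × Bool,
        (∏ e : G.edgeFinset,
            wt (Real.exp (-2 * (Jσ + Jτ)))
               (Real.exp (-2 * Jτ) * (Real.exp (-2 * Jστ) - Real.exp (-2 * Jσ)))
               (Real.exp (-2 * Jσ) * (Real.exp (-2 * Jστ) - Real.exp (-2 * Jτ)))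
               (1 - Real.exp (-2 * (Jσ + Jστ)) - Real.exp (-2 * (Jτ + Jστ)) +
                  Real.exp (-2 * (Jσ + Jτ)))
               (n e)) *
          2 ^ Ncl G (fun e => (n e).1) * 2 ^ Ncl G (fun e => (n e).2) := by
  rw [mul_comm _ (G.edgeFinset.card : ℝ), Real.exp_nat_mul]
  calc _ = ∑ στ : (V → Bool) × (V → Bool), Real.exp (Jσ + Jτ + Jστ) ^ G.edgeFinset.card *
          ∑ n : G.edgeFinset → Bool × Bool, ∏ e : G.edgeFinset, atBondWeight Jσ Jτ Jστ (n e) *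
            ((if (n e).1 → (e.1.map στ.1).IsDiag then 1 else 0) *
              (if (n e).2 → (e.1.map στ.2).IsDiag then 1 else 0)) :=
        Finset.sum_congr rfl fun στ _ => prod_atWeight_spin_eq_sum Jσ Jτ Jστ G στ.1 στ.2
    _ = _ := by
      rw [← Finset.mul_sum, Finset.sum_comm]
      congr 1
      refine Finset.sum_congr rfl fun n _ => ?_
      simp only [Finset.prod_mul_distrib]
      rw [← Finset.mul_sum, sum_prod_ite_isDiag_map_pair, mul_assoc]
      rfl
end

section
/- Let E be a finite set and for each e ∈ E let a0(e), aσ(e), aτ(e), aστ(e) ≥ 0 with a0(e)+aσ(e)+aτ(e)+aστ(e) = 1, and let c : E → {>, <} be a classification such that aστ(e)a0(e) ≥ aσ(e)aτ(e) whenever c(e) = > and aσ(e)aτ(e) ≥ aστ(e)a0(e) whenever c(e) = <. Then the product probability measure λ(n) = ∏_{e∈E} a_{n(e)}(e) on configurations n : E → {0,1}² (with a_{(0,0)}=a0, a_{(1,0)}=aσ, a_{(0,1)}=aτ, a_{(1,1)}=aστ) satisfies the lattice condition λ(n ∨ n')·λ(n ∧ n') ≥ λ(n)·λ(n') for all configurations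 n, n', and consequently λ(f·g) ≥ λ(f)·λ(g) for all functions f, g that are increasing with respect to the order ≼; i.e. λ is FKG. -/
/-- The per-edge partial order: for class `>` (`c = true`) the product order on
`{0,1}²`; for class `<` (`c = false`) the order with bottom `(0,1)`, top `(1,0)` and
incomparable middle elements `(0,0)`, `(1,1)`. -/
def edgeLe (c : Bool) (x y : Bool × Bool) : Prop :=
  x.1 ≤ y.1 ∧ (if c then x.2 ≤ y.2 else y.2 ≤ x.2)

/-- The componentwise partial order `≼` on configurations. -/
def confLe {E : Type*} (c : E → Bool) (n n' : E → Bool × Bool) : Prop :=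
  ∀ e, edgeLe (c e) (n e) (n' e)

/-- The per-edge join for the order `edgeLe c`. -/
def edgeSup (c : Bool) (x y : Bool × Bool) : Bool × Bool :=
  (x.1 || y.1, if c then x.2 || y.2 else x.2 && y.2)

/-- The per-edge meet for the order `edgeLe c`. -/
def edgeInf (c : Bool) (x y : Bool × Bool) : Bool × Bool :=
  (x.1 && y.1, if c then x.2 && y.2 else x.2 || y.2)

/-!
On a single edge the lattice condition is trivial for comparable states, and for the two
incomparable ones it is exactly the hypothesis `hc`; nonnegativity of the weights lets it multiply
over the edges. Flipping the second coordinate on the edges of class `<` is an order isomorphism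
from the product order on `E → Bool × Bool` (a finite distributive lattice) to `≼` that carries
`⊔`, `⊓` to `edgeSup`, `edgeInf`, so Mathlib's FKG inequality applies after transport; it needs
nonnegative functions, which is arranged by subtracting the values at the bottom configuration.
-/

open Finset

section FKG

variable {α β : Type*} [DistribLattice α] [OrderBot α] [Fintype α]
  [CommRing β] [LinearOrder β] [IsStrictOrderedRing β]

theorem fkg_of_orderBot {μ f g : α → β} (hμ₀ : 0 ≤ μ) (hf : Monotone f) (hg : Monotone g)
    (hμ : ∀ a b, μ a * μ b ≤ μ (a ⊓ b) * μ (a ⊔ b)) :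
    (∑ a, μ a * f a) * ∑ a, μ a * g a ≤ (∑ a, μ a) * ∑ a, μ a * (f a * g a) := by
  have key := fkg (fun a ↦ f a - f ⊥) (fun a ↦ g a - g ⊥) μ hμ₀
    (fun a ↦ sub_nonneg.2 (hf bot_le)) (fun a ↦ sub_nonneg.2 (hg bot_le))
    (fun a b h ↦ sub_le_sub_right (hf h) _) (fun a b h ↦ sub_le_sub_right (hg h) _) hμ
  have expand : ∀ a, μ a * ((f a - f ⊥) * (g a - g ⊥)) =
      μ a * (f a * g a) - f ⊥ * (μ a * g a) - g ⊥ * (μ a * f a) + f ⊥ * g ⊥ * μ a := by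
    intro a; ring
  rw [sum_congr rfl fun a _ ↦ expand a] at key
  simp only [mul_sub, sum_sub_distrib, sum_add_distrib, ← sum_mul, ← mul_sum] at key
  linear_combination key

end FKG

theorem prod_mul_prod_le_prod_mul_prod {ι X R : Type*} [Fintype ι] [CommSemiring R]
    [PartialOrder R] [IsOrderedRing R] (w : ι → X → R) (inf sup : ι → X → X → X)
    (hw : ∀ i x, 0 ≤ w i x)
    (h : ∀ i x y, w i x * w i y ≤ w i (inf i x y) * w i (sup i x y)) (n n' : ι → X) :
    (∏ i, w i (n i)) * ∏ i, w i (n' i) ≤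
      (∏ i, w i (inf i (n i) (n' i))) * ∏ i, w i (sup i (n i) (n' i)) := by
  simp only [← prod_mul_distrib]
  exact prod_le_prod (fun i _ ↦ mul_nonneg (hw i _) (hw i _)) fun i _ ↦ h i _ _

theorem wt_mul_wt_le {a0 aσ aτ aστ : ℝ} {c : Bool}
    (hc : if c then aστ * a0 ≥ aσ * aτ else aσ * aτ ≥ aστ * a0) (x y : Bool × Bool) :
    wt a0 aσ aτ aστ x * wt a0 aσ aτ aστ y ≤
      wt a0 aσ aτ aστ (edgeInf c x y) * wt a0 aσ aτ aστ (edgeSup c x y) := by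
  obtain ⟨_ | _, _ | _⟩ := x <;> obtain ⟨_ | _, _ | _⟩ := y <;> cases c <;>
    simp [wt, edgeInf, edgeSup] at hc ⊢ <;> linarith

theorem sum_wt (a0 aσ aτ aστ : ℝ) : ∑ x, wt a0 aσ aτ aστ x = a0 + aσ + aτ + aστ := by
  simp only [Fintype.sum_prod_type, Fintype.sum_bool, wt]; ring

def edgeFlip (c : Bool) (x : Bool × Bool) : Bool × Bool :=
  (x.1, if c then x.2 else !x.2)

theorem edgeFlip_edgeFlip : ∀ c x, edgeFlip c (edgeFlip c x) = x := by decide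

theorem edgeLe_edgeFlip_iff : ∀ c x y, edgeLe c (edgeFlip c x) (edgeFlip c y) ↔ x ≤ y := by
  unfold edgeLe edgeFlip; decide

theorem edgeSup_edgeFlip :
    ∀ c x y, edgeSup c (edgeFlip c x) (edgeFlip c y) = edgeFlip c (x ⊔ y) := by
  decide

theorem edgeInf_edgeFlip :
    ∀ c x y, edgeInf c (edgeFlip c x) (edgeFlip c y) = edgeFlip c (x ⊓ y) := by
  decide

section Configuration

variable {E : Type*} (c : E → Bool)

def confFlip (n : E → Bool × Bool) : E → Bool × Bool :=
  fun e ↦ edgeFlip (c e) (n e)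

theorem confFlip_involutive : Function.Involutive (confFlip c) :=
  fun n ↦ funext fun e ↦ edgeFlip_edgeFlip (c e) (n e)

theorem confLe_confFlip_iff {n n' : E → Bool × Bool} :
    confLe c (confFlip c n) (confFlip c n') ↔ n ≤ n' :=
  forall_congr' fun e ↦ edgeLe_edgeFlip_iff (c e) (n e) (n' e)

theorem confFlip_inf (n n' : E → Bool × Bool) :
    confFlip c (n ⊓ n') = fun e ↦ edgeInf (c e) (confFlip c n e) (confFlip c n' e) :=
  funext fun e ↦ (edgeInf_edgeFlip (c e) (n e) (n' e)).symm

theorem confFlip_sup (n n' : E → Bool × Bool) :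
    confFlip c (n ⊔ n') = fun e ↦ edgeSup (c e) (confFlip c n e) (confFlip c n' e) :=
  funext fun e ↦ (edgeSup_edgeFlip (c e) (n e) (n' e)).symm

theorem fkg_confLe {β : Type*} [CommRing β] [LinearOrder β] [IsStrictOrderedRing β]
    [Fintype E] [DecidableEq E] {μ f g : (E → Bool × Bool) → β} (hμ₀ : 0 ≤ μ)
    (hf : ∀ n n', confLe c n n' → f n ≤ f n') (hg : ∀ n n', confLe c n n' → g n ≤ g n')
    (hμ : ∀ n n', μ n * μ n' ≤
      μ (fun e ↦ edgeInf (c e) (n e) (n' e)) * μ (fun e ↦ edgeSup (c e) (n e) (n' e))) :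
    (∑ n, μ n * f n) * ∑ n, μ n * g n ≤ (∑ n, μ n) * ∑ n, μ n * (f n * g n) := by
  let F := (confFlip_involutive c).toPerm
  have key := fkg_of_orderBot (μ := μ ∘ F) (f := f ∘ F) (g := g ∘ F) (fun n ↦ hμ₀ (F n))
    (fun n n' h ↦ hf _ _ ((confLe_confFlip_iff c).2 h))
    (fun n n' h ↦ hg _ _ ((confLe_confFlip_iff c).2 h))
    (fun n n' ↦ by simpa only [Function.comp_apply, F, Function.Involutive.coe_toPerm,
      confFlip_inf, confFlip_sup] using hμ (F n) (F n'))
  simpa only [Function.comp_apply, Equiv.sum_comp F (fun n ↦ μ n * f n),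
    Equiv.sum_comp F (fun n ↦ μ n * g n), Equiv.sum_comp F μ,
    Equiv.sum_comp F (fun n ↦ μ n * (f n * g n))] using key

end Configuration

/-- the generalized percolation (product) measure satisfies the FKG lattice
condition and hence the FKG inequality for functions increasing w.r.t. `≼`. -/
theorem stmt14 {E : Type*} [Fintype E] [DecidableEq E]
    (a0 aσ aτ aστ : E → ℝ) (c : E → Bool)
    (hpos : ∀ e x, 0 ≤ wt (a0 e) (aσ e) (aτ e) (aστ e) x)
    (hsum : ∀ e, a0 e + aσ e + aτ e + aστ e = 1)
    (hc : ∀ e, if c e then aστ e * a0 e ≥ aσ e * aτ e else aσ e * aτ e ≥ aστ e * a0 e) :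
    (∀ n n' : E → Bool × Bool,
      (∏ e, wt (a0 e) (aσ e) (aτ e) (aστ e) (edgeSup (c e) (n e) (n' e))) *
        (∏ e, wt (a0 e) (aσ e) (aτ e) (aστ e) (edgeInf (c e) (n e) (n' e))) ≥
      (∏ e, wt (a0 e) (aσ e) (aτ e) (aστ e) (n e)) *
        (∏ e, wt (a0 e) (aσ e) (aτ e) (aστ e) (n' e))) ∧
    (∀ f g : (E → Bool × Bool) → ℝ,
      (∀ n n', confLe c n n' → f n ≤ f n') →
      (∀ n n', confLe c n n' → g n ≤ g n') →
      (∑ n : E → Bool × Bool, f n * g n * ∏ e, wt (a0 e) (aσ e) (aτ e) (aστ e) (n e)) ≥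
        (∑ n : E → Bool × Bool, f n * ∏ e, wt (a0 e) (aσ e) (aτ e) (aστ e) (n e)) *
        (∑ n : E → Bool × Bool, g n * ∏ e, wt (a0 e) (aσ e) (aτ e) (aστ e) (n e))) := by
  let w e := wt (a0 e) (aσ e) (aτ e) (aστ e)
  have lattice := prod_mul_prod_le_prod_mul_prod w (fun e ↦ edgeInf (c e)) (fun e ↦ edgeSup (c e))
    hpos fun e ↦ wt_mul_wt_le (hc e)
  have mass : ∑ n : E → Bool × Bool, ∏ e, w e (n e) = 1 := by
    simp only [← Fintype.prod_sum, w, sum_wt, hsum, prod_const_one]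
  refine ⟨fun n n' ↦ (lattice n n').trans_eq (mul_comm _ _), fun f g hf hg ↦ ?_⟩
  have ineq := fkg_confLe c (fun n ↦ prod_nonneg fun e _ ↦ hpos e (n e)) hf hg lattice
  rw [mass, one_mul] at ineq
  simpa only [ge_iff_le, mul_comm] using ineq
end
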